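/- arXiv:2503.14117 — 6 statements merged into one kernel-verified Lean document; each statement's English description precedes it below -/
import Mathlib

section
/- Let Γ be a nonempty finite set, let 𝓑 be a nonempty family of subsets of Γ, and let A ⊆ Γ be non-trivial. Then ρ(A, 𝓑) ≤ D_∩(A | 𝓑); that is, the cover complexity of A with respect to 𝓑 is at most the intersection complexity of A with respect to 𝓑. -/
open Set Filter

section Defs

variable {Γ : Type*}

/-- `StepOK 𝓑 seq ops` says that each set `seq i` in the sequence is obtained as the
union or intersection (according to `ops i`) of two sets, each of which is either a
generator in `𝓑` or an earlier set of the sequence. -/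
def StepOK (𝓑 : Set (Set Γ)) {t : ℕ} (seq : Fin t → Set Γ) (ops : Fin t → Bool) : Prop :=
  ∀ i : Fin t, ∃ X Y : Set Γ,
    (X ∈ 𝓑 ∨ ∃ j : Fin t, j < i ∧ X = seq j) ∧
    (Y ∈ 𝓑 ∨ ∃ j : Fin t, j < i ∧ Y = seq j) ∧
    seq i = if ops i = true then X ∩ Y else X ∪ Y

/-- The number of intersection operations used in the sequence. -/
def interCount {t : ℕ} (ops : Fin t → Bool) : ℕ :=
  (Finset.univ.filter fun i => ops i = true).card

/-- The number of union operations used in the sequence. -/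
def unionCount {t : ℕ} (ops : Fin t → Bool) : ℕ :=
  (Finset.univ.filter fun i => ops i = false).card

/-- The discrete complexity `D(A | 𝓑)`: the minimum length of a sequence generating
`A` from `𝓑` (`⊤` if none exists). -/
noncomputable def Dtot (A : Set Γ) (𝓑 : Set (Set Γ)) : ℕ∞ :=
  sInf {m : ℕ∞ | ∃ (t : ℕ) (seq : Fin (t + 1) → Set Γ) (ops : Fin (t + 1) → Bool),
    StepOK 𝓑 seq ops ∧ seq (Fin.last t) = A ∧ m = ((t + 1 : ℕ) : ℕ∞)}

/-- The intersection complexity `D_∩(A | 𝓑)`: the minimum number of intersection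
operations over all sequences generating `A` from `𝓑`. -/
noncomputable def Dcap (A : Set Γ) (𝓑 : Set (Set Γ)) : ℕ∞ :=
  sInf {m : ℕ∞ | ∃ (t : ℕ) (seq : Fin (t + 1) → Set Γ) (ops : Fin (t + 1) → Bool),
    StepOK 𝓑 seq ops ∧ seq (Fin.last t) = A ∧ m = ((interCount ops : ℕ) : ℕ∞)}

/-- The union complexity `D_∪(A | 𝓑)`. -/
noncomputable def Dcup (A : Set Γ) (𝓑 : Set (Set Γ)) : ℕ∞ :=
  sInf {m : ℕ∞ | ∃ (t : ℕ) (seq : Fin (t + 1) → Set Γ) (ops : Fin (t + 1) → Bool),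
    StepOK 𝓑 seq ops ∧ seq (Fin.last t) = A ∧ m = ((unionCount ops : ℕ) : ℕ∞)}

/-- Simultaneous discrete complexity `D(A_1, …, A_ℓ | 𝓑)` of generating every set in
the family `As` from `𝓑`. -/
noncomputable def DtotSim (As : Set (Set Γ)) (𝓑 : Set (Set Γ)) : ℕ∞ :=
  sInf {m : ℕ∞ | ∃ (t : ℕ) (seq : Fin (t + 1) → Set Γ) (ops : Fin (t + 1) → Bool),
    StepOK 𝓑 seq ops ∧ (∀ A ∈ As, ∃ i, seq i = A) ∧ m = ((t + 1 : ℕ) : ℕ∞)}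

/-- Simultaneous intersection complexity. -/
noncomputable def DcapSim (As : Set (Set Γ)) (𝓑 : Set (Set Γ)) : ℕ∞ :=
  sInf {m : ℕ∞ | ∃ (t : ℕ) (seq : Fin (t + 1) → Set Γ) (ops : Fin (t + 1) → Bool),
    StepOK 𝓑 seq ops ∧ (∀ A ∈ As, ∃ i, seq i = A) ∧ m = ((interCount ops : ℕ) : ℕ∞)}

/-- Simultaneous union complexity. -/
noncomputable def DcupSim (As : Set (Set Γ)) (𝓑 : Set (Set Γ)) : ℕ∞ :=
  sInf {m : ℕ∞ | ∃ (t : ℕ) (seq : Fin (t + 1) → Set Γ) (ops : Fin (t + 1) → Bool),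
    StepOK 𝓑 seq ops ∧ (∀ A ∈ As, ∃ i, seq i = A) ∧ m = ((unionCount ops : ℕ) : ℕ∞)}

/-- A semi-filter over `U`: a nonempty, upward-closed (within `U`) family of subsets
of `U` not containing `∅`. -/
def SemiFilter (U : Set Γ) (F : Set (Set Γ)) : Prop :=
  F.Nonempty ∧ (∀ S ∈ F, S ⊆ U) ∧
    (∀ S ∈ F, ∀ T : Set Γ, S ⊆ T → T ⊆ U → T ∈ F) ∧ ∅ ∉ F

/-- `F` is above the element `w` with respect to `𝓑` and `U`. -/
def Above (𝓑 : Set (Set Γ)) (U : Set Γ) (F : Set (Set Γ)) (w : Γ) : Prop :=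
  ∀ B ∈ 𝓑, w ∈ B → B ∩ U ∈ F

/-- `F` preserves the pair `p = (E, H)`. -/
def PreservesPair (F : Set (Set Γ)) (p : Set Γ × Set Γ) : Prop :=
  p.1 ∈ F → p.2 ∈ F → p.1 ∩ p.2 ∈ F

/-- `Λ` is a family of pairs of subsets of `U = Aᶜ` such that no semi-filter over `U`
both preserves `Λ` and is above some element of `A`. -/
def Covers (A : Set Γ) (𝓑 : Set (Set Γ)) (Λ : Finset (Set Γ × Set Γ)) : Prop :=
  (∀ p ∈ Λ, p.1 ⊆ Aᶜ ∧ p.2 ⊆ Aᶜ) ∧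
    ¬∃ (F : Set (Set Γ)) (a : Γ), SemiFilter Aᶜ F ∧ a ∈ A ∧ Above 𝓑 Aᶜ F a ∧
      ∀ p ∈ Λ, PreservesPair F p

/-- The cover complexity `ρ(A, 𝓑)`. -/
noncomputable def rho (A : Set Γ) (𝓑 : Set (Set Γ)) : ℕ∞ :=
  sInf {m : ℕ∞ | ∃ Λ : Finset (Set Γ × Set Γ), Covers A 𝓑 Λ ∧ m = ((Λ.card : ℕ) : ℕ∞)}

/-- A semi-ultra-filter over `U`: a semi-filter containing, for every `A' ⊆ U`, at
least one of `A'` and `U \ A'`. -/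
def SemiUltraFilter (U : Set Γ) (F : Set (Set Γ)) : Prop :=
  SemiFilter U F ∧ ∀ A' : Set Γ, A' ⊆ U → (A' ∈ F ∨ U \ A' ∈ F)

/-- The conondeterministic cover complexity `ρ_ultra(A, 𝓑)`. -/
noncomputable def rhoUltra (A : Set Γ) (𝓑 : Set (Set Γ)) : ℕ∞ :=
  sInf {m : ℕ∞ | ∃ Λ : Finset (Set Γ × Set Γ),
    (∀ p ∈ Λ, p.1 ⊆ Aᶜ ∧ p.2 ⊆ Aᶜ) ∧
    (¬∃ (F : Set (Set Γ)) (a : Γ), SemiUltraFilter Aᶜ F ∧ a ∈ A ∧ Above 𝓑 Aᶜ F a ∧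
      ∀ p ∈ Λ, PreservesPair F p) ∧
    m = ((Λ.card : ℕ) : ℕ∞)}

/-- One step of the evaluation of a syntactic (possibly cyclic) sequence: an argument
is either a reference to a member of the sequence or a fixed generator set. -/
def cycEval {t : ℕ} (arg1 arg2 : Fin t → Fin t ⊕ Set Γ) (ops : Fin t → Bool) :
    ℕ → Fin t → Set Γ
  | 0 => fun _ => ∅
  | j + 1 => fun i =>
      cycEval arg1 arg2 ops j i ∪
        (if ops i = true then
          Sum.elim (cycEval arg1 arg2 ops j) id (arg1 i) ∩
            Sum.elim (cycEval arg1 arg2 ops j) id (arg2 i)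
        else
          Sum.elim (cycEval arg1 arg2 ops j) id (arg1 i) ∪
            Sum.elim (cycEval arg1 arg2 ops j) id (arg2 i))

/-- The fixed set arguments of a syntactic sequence must be generators from `𝓑`. -/
def ArgsOK (𝓑 : Set (Set Γ)) {t : ℕ} (arg1 arg2 : Fin t → Fin t ⊕ Set Γ) : Prop :=
  ∀ i : Fin t, (∀ B : Set Γ, arg1 i = Sum.inr B → B ∈ 𝓑) ∧
    (∀ B : Set Γ, arg2 i = Sum.inr B → B ∈ 𝓑)

/-- The cyclic intersection complexity `D°_∩(A | 𝓑)`: the minimum number of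
intersection operations over all syntactic sequences generating `A` from `𝓑`. -/
noncomputable def DcapCyc (A : Set Γ) (𝓑 : Set (Set Γ)) : ℕ∞ :=
  sInf {m : ℕ∞ | ∃ (t : ℕ) (arg1 arg2 : Fin (t + 1) → Fin (t + 1) ⊕ Set Γ)
      (ops : Fin (t + 1) → Bool),
    ArgsOK 𝓑 arg1 arg2 ∧
    (∃ j : ℕ, ∀ j' ≥ j, cycEval arg1 arg2 ops j' (Fin.last t) = A) ∧
    m = ((interCount ops : ℕ) : ℕ∞)}

end Defs

/-- The row star `R_i ⊆ [N] × [M]`. -/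
def rowSet (N M : ℕ) (i : Fin N) : Set (Fin N × Fin M) := {p | p.1 = i}

/-- The column star `C_j ⊆ [N] × [M]`. -/
def colSet (N M : ℕ) (j : Fin M) : Set (Fin N × Fin M) := {p | p.2 = j}

/-- The generators `𝓖_{N,M}` of graph complexity: all row stars and column stars. -/
def graphGens (N M : ℕ) : Set (Set (Fin N × Fin M)) :=
  Set.range (rowSet N M) ∪ Set.range (colSet N M)

/-- The generators `𝓑_m` of Boolean circuit complexity over `{0,1}^m`:
all sets `B_i = {v : v_i = 1}` and their complements. -/
def cubeGens (m : ℕ) : Set (Set (Fin m → Bool)) :=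
  {S | ∃ i : Fin m, S = {v | v i = true} ∨ S = {v | v i = false}}

/-- `bin : [N] → {0,1}^n` for `N = 2^n`: the element `k` (representing the integer
`k + 1`) maps to the string `w` with `num(w) = k`, i.e. position `j` holds bit
`n - 1 - j` of `k`. -/
def binMap (n : ℕ) (k : Fin (2 ^ n)) : Fin n → Bool :=
  fun j => (k : ℕ).testBit (n - 1 - (j : ℕ))

/-- The bijection `φ : [N] × [N] → {0,1}^{2n}`, `φ(u, v) = bin(u)bin(v)`. -/
def phi (n : ℕ) (p : Fin (2 ^ n) × Fin (2 ^ n)) : Fin (2 * n) → Bool :=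
  fun j =>
    if h : (j : ℕ) < n then binMap n p.1 ⟨(j : ℕ), h⟩
    else binMap n p.2 ⟨(j : ℕ) - n, by have := j.isLt; omega⟩

/-- The canonical family `𝓕_e` for an edge `e = (u, v)` of a graph `G`:
all `W ⊆ Ḡ` containing `R_u ∩ Ḡ` or `C_v ∩ Ḡ`. -/
def canonFam (N : ℕ) (G : Set (Fin N × Fin N)) (e : Fin N × Fin N) :
    Set (Set (Fin N × Fin N)) :=
  {W | W ⊆ Gᶜ ∧ (rowSet N N e.1 ∩ Gᶜ ⊆ W ∨ colSet N N e.2 ∩ Gᶜ ⊆ W)}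

/-- The canonical cover complexity `ρ_can(G, 𝓖_{N,N})`: the minimum size of a family
`Λ` of pairs of subsets of `Ḡ` such that every canonical semi-filter `𝓕_e`
(for `e ∈ G`, when it is a semi-filter) fails to preserve some pair in `Λ`. -/
noncomputable def rhoCan (N : ℕ) (G : Set (Fin N × Fin N)) : ℕ∞ :=
  sInf {m : ℕ∞ | ∃ Λ : Finset (Set (Fin N × Fin N) × Set (Fin N × Fin N)),
    (∀ p ∈ Λ, p.1 ⊆ Gᶜ ∧ p.2 ⊆ Gᶜ) ∧
    (∀ e ∈ G, SemiFilter Gᶜ (canonFam N G e) →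
      ∃ p ∈ Λ, ¬ PreservesPair (canonFam N G e) p) ∧
    m = ((Λ.card : ℕ) : ℕ∞)}

/-!
Fix a sequence generating `A` and let `U = Aᶜ`. For each intersection step `X ∩ Y` put the
pair `(X ∩ U, Y ∩ U)` into `Λ`; there are at most as many pairs as intersection steps. If a
semi-filter `F` over `U` above some `a ∈ A` preserved `Λ`, then along the sequence every set
`S` containing `a` would satisfy `S ∩ U ∈ F`: generators because `F` is above `a`, unions by
upward closure, intersections because `F` preserves the corresponding pair. For the last set
`A` this puts `A ∩ U = ∅` into `F`, which is impossible.
-/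

section FusionLowerBound

variable {Γ : Type*} {𝓑 : Set (Set Γ)} {U : Set Γ} {F : Set (Set Γ)} {a : Γ}
  {t : ℕ} {seq X Y : Fin t → Set Γ} {ops : Fin t → Bool}

open Classical in
noncomputable def intersectionPairs (U : Set Γ) (X Y : Fin t → Set Γ) (ops : Fin t → Bool) :
    Finset (Set Γ × Set Γ) :=
  (Finset.univ.filter fun i => ops i = true).image fun i => (X i ∩ U, Y i ∩ U)

lemma card_intersectionPairs_le : (intersectionPairs U X Y ops).card ≤ interCount ops :=
  Finset.card_image_le

lemma subset_of_mem_intersectionPairs {p : Set Γ × Set Γ}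
    (hp : p ∈ intersectionPairs U X Y ops) : p.1 ⊆ U ∧ p.2 ⊆ U := by
  obtain ⟨i, -, rfl⟩ := Finset.mem_image.1 hp
  exact ⟨inter_subset_right, inter_subset_right⟩

lemma SemiFilter.inter_mem_of_subset (hF : SemiFilter U F) {S T : Set Γ} (hS : S ∩ U ∈ F)
    (hST : S ⊆ T) : T ∩ U ∈ F :=
  hF.2.2.1 _ hS _ (inter_subset_inter_left U hST) inter_subset_right

lemma inter_mem_of_mem_seq (hF : SemiFilter U F) (habove : Above 𝓑 U F a)
    (hX : ∀ i, X i ∈ 𝓑 ∨ ∃ j < i, X i = seq j) (hY : ∀ i, Y i ∈ 𝓑 ∨ ∃ j < i, Y i = seq j)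
    (hseq : ∀ i, seq i = if ops i = true then X i ∩ Y i else X i ∪ Y i)
    (hpres : ∀ p ∈ intersectionPairs U X Y ops, PreservesPair F p) (i : Fin t)
    (hai : a ∈ seq i) : seq i ∩ U ∈ F := by
  induction i using WellFoundedLT.induction with
  | _ i ih =>
    have hargs : ∀ Z, (Z ∈ 𝓑 ∨ ∃ j < i, Z = seq j) → a ∈ Z → Z ∩ U ∈ F := by
      rintro Z (hZ | ⟨j, hj, rfl⟩) haZ
      · exact habove Z hZ haZ
      · exact ih j hj haZ
    by_cases hop : ops i = true
    · rw [hseq i, if_pos hop] at hai ⊢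
      have hpair : (X i ∩ U, Y i ∩ U) ∈ intersectionPairs U X Y ops :=
        Finset.mem_image.2 ⟨i, Finset.mem_filter.2 ⟨Finset.mem_univ i, hop⟩, rfl⟩
      rw [inter_inter_distrib_right]
      exact hpres _ hpair (hargs _ (hX i) hai.1) (hargs _ (hY i) hai.2)
    · rw [hseq i, if_neg hop] at hai ⊢
      rcases hai with haX | haY
      · exact hF.inter_mem_of_subset (hargs _ (hX i) haX) subset_union_left
      · exact hF.inter_mem_of_subset (hargs _ (hY i) haY) subset_union_right

lemma covers_intersectionPairs {A : Set Γ} {seq X Y : Fin (t + 1) → Set Γ}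
    {ops : Fin (t + 1) → Bool}
    (hX : ∀ i, X i ∈ 𝓑 ∨ ∃ j < i, X i = seq j) (hY : ∀ i, Y i ∈ 𝓑 ∨ ∃ j < i, Y i = seq j)
    (hseq : ∀ i, seq i = if ops i = true then X i ∩ Y i else X i ∪ Y i)
    (hlast : seq (Fin.last t) = A) : Covers A 𝓑 (intersectionPairs Aᶜ X Y ops) := by
  refine ⟨fun p hp => subset_of_mem_intersectionPairs hp, ?_⟩
  rintro ⟨F, a, hF, haA, habove, hpres⟩
  have hA : A ∩ Aᶜ ∈ F := hlast ▸
    inter_mem_of_mem_seq hF habove hX hY hseq hpres (Fin.last t) (hlast ▸ haA)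
  exact hF.2.2.2 (inter_compl_self A ▸ hA)

end FusionLowerBound

theorem fusion_lower_bound_general {Γ : Type*}
    (𝓑 : Set (Set Γ))
    (A : Set Γ) :
    rho A 𝓑 ≤ Dcap A 𝓑 := by
  refine le_sInf ?_
  rintro _ ⟨t, seq, ops, hstep, hlast, rfl⟩
  choose X Y hX hY hseq using hstep
  exact sInf_le_of_le ⟨_, covers_intersectionPairs hX hY hseq hlast, rfl⟩
    (Nat.cast_le.2 card_intersectionPairs_le)

/-- Fusion lower bound: for a nonempty finite ground set `Γ`, a
nonempty family `𝓑` of subsets of `Γ`, and a non-trivial `A ⊆ Γ`,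
`ρ(A, 𝓑) ≤ D_∩(A | 𝓑)`. -/
theorem fusion_lower_bound {Γ : Type*} [Fintype Γ] [Nonempty Γ]
    (𝓑 : Set (Set Γ)) (h𝓑 : 𝓑.Nonempty)
    (A : Set Γ) (hA₁ : A ≠ ∅) (hA₂ : A ≠ Set.univ) :
    rho A 𝓑 ≤ Dcap A 𝓑 :=
  fusion_lower_bound_general 𝓑 A
end

section
/- Let Γ be a nonempty finite set, let 𝓑 be a nonempty family of subsets of Γ, and let A ⊆ Γ be non-trivial. Then D_∩(A | 𝓑) ≤ ρ(A, 𝓑)²; that is, the intersection complexity of A with respect to 𝓑 is at most the square of its cover complexity. -/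
open Set Filter

/-
Let `Λ` be a cover of `A` with `r` pairs and `U = Aᶜ`. For a point `x`, start from the family of
supersets `W` of the traces `B ∩ U` of the generators `B ∋ x`, and let every pair `(E, H)` of `Λ`
whose halves both lie in the family add all supersets of `E ∩ H`. Each round is determined by
the set of pairs fired so far, which only grows inside `Λ`, so after `r` rounds the family is
closed: it is upward closed, above `x` and preserves `Λ`. Together with `U` it would be a
semi-filter, so for `x ∈ A` it must contain `∅`; for `x ∈ U` every member contains `x`.
Evaluated at all points at once, round `s` assigns to `W` the set `C_s(W)` of points whose family
contains `W`. Then `C_{s+1}(W)` is a union of generators and of the `r` sets `C_s(E) ∩ C_s(H)`,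
so `A = C_r(∅)` is generated with `r · r` intersections.
-/

theorem Finset.isFixedPt_iterate_card {α : Type*} (Λ : Finset α) {Φ : Finset α → Finset α}
    (hΦ : Monotone Φ) (hΛ : ∀ P, Φ P ⊆ Λ) : Function.IsFixedPt Φ (Φ^[Λ.card] ∅) := by
  by_contra hne
  have hmono : Monotone fun n => Φ^[n] ∅ := hΦ.monotone_iterate_of_le_map (Finset.empty_subset _)
  have hgrow : ∀ n ≤ Λ.card + 1, n ≤ (Φ^[n] ∅).card := by
    intro n
    induction n with
    | zero => simp
    | succ n ih =>
      intro hn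
      have hstrict : Φ^[n] ∅ ≠ Φ^[n + 1] ∅ := fun hfix => hne <| by
        have hfixn : Function.IsFixedPt Φ (Φ^[n] ∅) := by
          rw [Function.iterate_succ_apply'] at hfix
          exact hfix.symm
        rw [show Λ.card = (Λ.card - n) + n by omega, Function.iterate_add_apply,
          (hfixn.iterate _).eq]
        exact hfixn
      have hlt : (Φ^[n] ∅).card < (Φ^[n + 1] ∅).card :=
        Finset.card_lt_card (lt_of_le_of_ne (hmono n.le_succ) hstrict)
      have := ih (by omega)
      omega
  have hbound : (Φ^[Λ.card + 1] ∅).card ≤ Λ.card := by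
    rw [Function.iterate_succ_apply']
    exact Finset.card_le_card (hΛ _)
  have := hgrow (Λ.card + 1) le_rfl
  omega

section Generation

variable {Γ : Type*} {𝓑 : Set (Set Γ)}

lemma interCount_snoc {t : ℕ} (ops : Fin t → Bool) (b : Bool) :
    interCount (Fin.snoc ops b : Fin (t + 1) → Bool) = interCount ops + if b then 1 else 0 := by
  unfold interCount
  rw [Finset.card_filter, Finset.card_filter, Fin.sum_univ_castSucc]
  simp [Fin.snoc_castSucc, Fin.snoc_last]

lemma StepOK.snoc {t : ℕ} {seq : Fin t → Set Γ} {ops : Fin t → Bool} (h : StepOK 𝓑 seq ops)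
    {X Y : Set Γ} (hX : X ∈ 𝓑 ∨ ∃ j, seq j = X) (hY : Y ∈ 𝓑 ∨ ∃ j, seq j = Y) (b : Bool) :
    StepOK 𝓑 (Fin.snoc seq (if b = true then X ∩ Y else X ∪ Y) : Fin (t + 1) → Set Γ)
      (Fin.snoc ops b) := by
  set seq' : Fin (t + 1) → Set Γ := Fin.snoc seq (if b = true then X ∩ Y else X ∪ Y)
  have hlast : ∀ Z, (Z ∈ 𝓑 ∨ ∃ j, seq j = Z) → Z ∈ 𝓑 ∨ ∃ j, j < Fin.last t ∧ Z = seq' j := by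
    rintro Z (hZ | ⟨j, rfl⟩)
    · exact Or.inl hZ
    · exact Or.inr ⟨j.castSucc, Fin.castSucc_lt_last j, by simp [seq']⟩
  have hcast : ∀ (i : Fin t) Z, (Z ∈ 𝓑 ∨ ∃ j, j < i ∧ Z = seq j) →
      Z ∈ 𝓑 ∨ ∃ j, j < i.castSucc ∧ Z = seq' j := by
    rintro i Z (hZ | ⟨j, hji, rfl⟩)
    · exact Or.inl hZ
    · exact Or.inr ⟨j.castSucc, Fin.castSucc_lt_castSucc_iff.mpr hji, by simp [seq']⟩
  intro i
  induction i using Fin.lastCases with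
  | last => exact ⟨X, Y, hlast X hX, hlast Y hY, by simp [seq']⟩
  | cast i =>
    obtain ⟨X', Y', hX', hY', hi⟩ := h i
    exact ⟨X', Y', hcast i X' hX', hcast i Y' hY', by simpa [seq'] using hi⟩

/-- `∅` is exempt: it is the value of an empty union, and intersecting with it is free. -/
def Generates (𝓑 : Set (Set Γ)) (k : ℕ) (S : Set (Set Γ)) : Prop :=
  ∃ (t : ℕ) (seq : Fin t → Set Γ) (ops : Fin t → Bool), StepOK 𝓑 seq ops ∧
    interCount ops ≤ k ∧ ∀ X ∈ S, X ≠ ∅ → X ∈ 𝓑 ∨ ∃ i, seq i = X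

lemma generates_zero_self : Generates 𝓑 0 𝓑 :=
  ⟨0, Fin.elim0, Fin.elim0, fun i => i.elim0, by simp [interCount], fun X hX _ => Or.inl hX⟩

namespace Generates

variable {k k' : ℕ} {S S' : Set (Set Γ)} {X Y : Set Γ}

lemma mono (h : Generates 𝓑 k S) (hk : k ≤ k') (hS : S' ⊆ S) : Generates 𝓑 k' S' := by
  obtain ⟨t, seq, ops, hok, hcount, hgen⟩ := h
  exact ⟨t, seq, ops, hok, hcount.trans hk, fun X hX => hgen X (hS hX)⟩

lemma insert_empty (h : Generates 𝓑 k S) : Generates 𝓑 k (insert ∅ S) := by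
  obtain ⟨t, seq, ops, hok, hcount, hgen⟩ := h
  exact ⟨t, seq, ops, hok, hcount, fun X hX hX₀ => hgen X (hX.resolve_left hX₀) hX₀⟩

lemma insert_op (h : Generates 𝓑 k S) (hX : X ∈ S) (hY : Y ∈ S) (hX₀ : X ≠ ∅) (hY₀ : Y ≠ ∅)
    (b : Bool) :
    Generates 𝓑 (k + if b then 1 else 0) (insert (if b = true then X ∩ Y else X ∪ Y) S) := by
  obtain ⟨t, seq, ops, hok, hcount, hgen⟩ := h
  refine ⟨t + 1, _, _, hok.snoc (hgen X hX hX₀) (hgen Y hY hY₀) b, ?_, ?_⟩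
  · rw [interCount_snoc]
    omega
  · rintro Z (rfl | hZ) hZ₀
    · exact Or.inr ⟨Fin.last t, by simp⟩
    · rcases hgen Z hZ hZ₀ with hZ | ⟨i, rfl⟩
      · exact Or.inl hZ
      · exact Or.inr ⟨i.castSucc, by simp⟩

lemma insert_union (h : Generates 𝓑 k S) (hX : X ∈ S) (hY : Y ∈ S) :
    Generates 𝓑 k (insert (X ∪ Y) S) := by
  rcases eq_or_ne X ∅ with rfl | hX₀
  · simpa [insert_eq_of_mem hY] using h
  rcases eq_or_ne Y ∅ with rfl | hY₀
  · simpa [insert_eq_of_mem hX] using h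
  simpa using h.insert_op hX hY hX₀ hY₀ false

lemma insert_inter (h : Generates 𝓑 k S) (hX : X ∈ S) (hY : Y ∈ S) :
    Generates 𝓑 (k + 1) (insert (X ∩ Y) S) := by
  rcases eq_or_ne X ∅ with rfl | hX₀
  · simpa using h.insert_empty.mono k.le_succ le_rfl
  rcases eq_or_ne Y ∅ with rfl | hY₀
  · simpa using h.insert_empty.mono k.le_succ le_rfl
  simpa using h.insert_op hX hY hX₀ hY₀ true

lemma insert_sUnion [Finite Γ] (h : Generates 𝓑 k S) {T : Set (Set Γ)} (hT : T ⊆ S) :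
    Generates 𝓑 k (insert (⋃₀ T) S) := by
  induction T, T.toFinite using Set.Finite.induction_on with
  | empty => simpa using h.insert_empty
  | @insert X T _ _ ih =>
    rw [sUnion_insert]
    exact ((ih ((subset_insert X T).trans hT)).insert_union
      (mem_insert_of_mem _ (hT (mem_insert X T))) (mem_insert _ _)).mono le_rfl
      (insert_subset_insert (subset_insert _ _))

lemma union_range_sUnion [Finite Γ] {ι : Type*} [Finite ι] (h : Generates 𝓑 k S)
    {T : ι → Set (Set Γ)} (hT : ∀ i, T i ⊆ S) :
    Generates 𝓑 k (S ∪ range fun i => ⋃₀ T i) := by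
  suffices ∀ J : Set ι, Generates 𝓑 k (S ∪ (fun i => ⋃₀ T i) '' J) by
    simpa [image_univ] using this univ
  intro J
  induction J, J.toFinite using Set.Finite.induction_on with
  | empty => simpa using h
  | @insert i J _ _ ih =>
    rw [image_insert_eq, union_insert]
    exact ih.insert_sUnion ((hT i).trans subset_union_left)

lemma union_image_inter {ι : Type*} (h : Generates 𝓑 k S) {f g : ι → Set Γ} (I : Finset ι)
    (hf : ∀ i ∈ I, f i ∈ S) (hg : ∀ i ∈ I, g i ∈ S) :
    Generates 𝓑 (k + I.card) (S ∪ (fun i => f i ∩ g i) '' I) := by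
  classical
  induction I using Finset.induction_on with
  | empty => simpa using h
  | @insert i I hi ih =>
    rw [Finset.card_insert_of_notMem hi, Finset.coe_insert, image_insert_eq, union_insert,
      ← add_assoc]
    exact (ih (fun j hj => hf j (by simp [hj])) (fun j hj => hg j (by simp [hj]))).insert_inter
      (subset_union_left (hf i (by simp))) (subset_union_left (hg i (by simp)))

lemma dcap_le (h : Generates 𝓑 k S) (hX : X ∈ S) (hX₀ : X ≠ ∅) : Dcap X 𝓑 ≤ k := by
  obtain ⟨t, seq, ops, hok, hcount, hgen⟩ := h
  have hok' := hok.snoc (hgen X hX hX₀) (hgen X hX hX₀) false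
  calc Dcap X 𝓑 ≤ ((interCount (Fin.snoc ops false : Fin (t + 1) → Bool) : ℕ) : ℕ∞) :=
        sInf_le ⟨t, _, _, hok', by simp, rfl⟩
    _ ≤ k := by
        rw [interCount_snoc]
        exact_mod_cast hcount

end Generates

end Generation

section Stages

variable {Γ : Type*} (𝓑 : Set (Set Γ)) (U : Set Γ) (Λ : Finset (Set Γ × Set Γ))

def baseSet (W : Set Γ) : Set Γ := ⋃₀ {B | B ∈ 𝓑 ∧ B ∩ U ⊆ W}

def stageStep (C : Set Γ → Set Γ) (W : Set Γ) : Set Γ :=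
  ⋃₀ ({B | B ∈ 𝓑 ∧ B ∩ U ⊆ W} ∪ (fun p => C p.1 ∩ C p.2) '' {p | p ∈ Λ ∧ p.1 ∩ p.2 ⊆ W})

def stageSet (s : ℕ) : Set Γ → Set Γ := (stageStep 𝓑 U Λ)^[s] (baseSet 𝓑 U)

def upFamily (x : Γ) (P : Finset (Set Γ × Set Γ)) : Set (Set Γ) :=
  {W | x ∈ baseSet 𝓑 U W ∨ ∃ p ∈ P, p.1 ∩ p.2 ⊆ W}

open Classical in
noncomputable def firedPairs (x : Γ) (P : Finset (Set Γ × Set Γ)) : Finset (Set Γ × Set Γ) :=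
  Λ.filter fun p => p.1 ∈ upFamily 𝓑 U x P ∧ p.2 ∈ upFamily 𝓑 U x P

variable {𝓑 U Λ} {x : Γ}

lemma mem_baseSet {W : Set Γ} : x ∈ baseSet 𝓑 U W ↔ ∃ B ∈ 𝓑, B ∩ U ⊆ W ∧ x ∈ B := by
  simp [baseSet, and_assoc]

lemma mem_of_mem_baseSet (hx : x ∈ U) {W : Set Γ} (h : x ∈ baseSet 𝓑 U W) : x ∈ W := by
  obtain ⟨B, -, hBW, hxB⟩ := mem_baseSet.mp h
  exact hBW ⟨hxB, hx⟩

lemma mem_upFamily_of_subset {P : Finset (Set Γ × Set Γ)} {W T : Set Γ}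
    (hW : W ∈ upFamily 𝓑 U x P) (hWT : W ⊆ T) : T ∈ upFamily 𝓑 U x P := by
  rcases hW with hW | ⟨p, hp, hpW⟩
  · obtain ⟨B, hB, hBW, hxB⟩ := mem_baseSet.mp hW
    exact Or.inl (mem_baseSet.mpr ⟨B, hB, hBW.trans hWT, hxB⟩)
  · exact Or.inr ⟨p, hp, hpW.trans hWT⟩

lemma upFamily_mono : Monotone (upFamily 𝓑 U x) := by
  rintro P Q hPQ W (hW | ⟨p, hp, hpW⟩)
  · exact Or.inl hW
  · exact Or.inr ⟨p, hPQ hp, hpW⟩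

lemma mem_firedPairs {P : Finset (Set Γ × Set Γ)} {p : Set Γ × Set Γ} :
    p ∈ firedPairs 𝓑 U Λ x P ↔ p ∈ Λ ∧ p.1 ∈ upFamily 𝓑 U x P ∧ p.2 ∈ upFamily 𝓑 U x P := by
  classical
  simp [firedPairs]

lemma firedPairs_mono : Monotone (firedPairs 𝓑 U Λ x) := fun _ _ hPQ _ hp => by
  obtain ⟨hpΛ, hp₁, hp₂⟩ := mem_firedPairs.mp hp
  exact mem_firedPairs.mpr ⟨hpΛ, upFamily_mono hPQ hp₁, upFamily_mono hPQ hp₂⟩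

lemma mem_stageStep {C : Set Γ → Set Γ} {W : Set Γ} :
    x ∈ stageStep 𝓑 U Λ C W ↔
      x ∈ baseSet 𝓑 U W ∨ ∃ p ∈ Λ, p.1 ∩ p.2 ⊆ W ∧ x ∈ C p.1 ∧ x ∈ C p.2 := by
  simp only [stageStep, baseSet, sUnion_union, mem_union]
  refine or_congr Iff.rfl ⟨?_, ?_⟩
  · rintro ⟨_, ⟨p, ⟨hp, hpW⟩, rfl⟩, hx₁, hx₂⟩
    exact ⟨p, hp, hpW, hx₁, hx₂⟩
  · rintro ⟨p, hp, hpW, hx₁, hx₂⟩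
    exact ⟨_, ⟨p, ⟨hp, hpW⟩, rfl⟩, hx₁, hx₂⟩

lemma mem_stageStep_iff {C : Set Γ → Set Γ} {P : Finset (Set Γ × Set Γ)}
    (hC : ∀ W, x ∈ C W ↔ W ∈ upFamily 𝓑 U x P) (W : Set Γ) :
    x ∈ stageStep 𝓑 U Λ C W ↔ W ∈ upFamily 𝓑 U x (firedPairs 𝓑 U Λ x P) := by
  simp only [mem_stageStep, hC, upFamily, mem_ofPred_eq, mem_firedPairs, and_assoc]
  grind

lemma mem_stageSet_iff (s : ℕ) (W : Set Γ) :
    x ∈ stageSet 𝓑 U Λ s W ↔ W ∈ upFamily 𝓑 U x ((firedPairs 𝓑 U Λ x)^[s] ∅) := by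
  induction s generalizing W with
  | zero => simp [stageSet, upFamily]
  | succ s ih =>
    rw [stageSet, Function.iterate_succ_apply', Function.iterate_succ_apply']
    exact mem_stageStep_iff ih W

lemma mem_of_mem_stageSet (hx : x ∈ U) {s : ℕ} {W : Set Γ} (h : x ∈ stageSet 𝓑 U Λ s W) :
    x ∈ W := by
  induction s generalizing W with
  | zero => exact mem_of_mem_baseSet hx h
  | succ s ih =>
    rw [stageSet, Function.iterate_succ_apply', mem_stageStep] at h
    rcases h with h | ⟨p, -, hpW, hx₁, hx₂⟩
    · exact mem_of_mem_baseSet hx h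
    · exact hpW ⟨ih hx₁, ih hx₂⟩

/-- Together with `Aᶜ`, a family closed under the pairs of `Λ` would be a semi-filter above
`x` preserving `Λ`, unless it contains `∅`. -/
lemma empty_mem_upFamily_of_covers {A : Set Γ} (hΛ : Covers A 𝓑 Λ) (hA : A ≠ univ) (hx : x ∈ A)
    {P : Finset (Set Γ × Set Γ)} (hP : firedPairs 𝓑 Aᶜ Λ x P ⊆ P) :
    ∅ ∈ upFamily 𝓑 Aᶜ x P := by
  by_contra hempty
  refine hΛ.2 ⟨{W | W ⊆ Aᶜ ∧ (W = Aᶜ ∨ W ∈ upFamily 𝓑 Aᶜ x P)}, x, ⟨?_, ?_, ?_, ?_⟩, hx, ?_, ?_⟩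
  · exact ⟨Aᶜ, subset_rfl, Or.inl rfl⟩
  · exact fun W hW => hW.1
  · rintro W ⟨-, rfl | hW⟩ T hWT hT
    · exact ⟨hT, Or.inl (hT.antisymm hWT)⟩
    · exact ⟨hT, Or.inr (mem_upFamily_of_subset hW hWT)⟩
  · rintro ⟨-, h | h⟩
    · exact nonempty_compl.mpr hA |>.ne_empty h.symm
    · exact hempty h
  · intro B hB hxB
    exact ⟨inter_subset_right, Or.inr (Or.inl (mem_baseSet.mpr ⟨B, hB, subset_rfl, hxB⟩))⟩
  · rintro ⟨E, H⟩ hp ⟨hE, rfl | hE'⟩ ⟨hH, rfl | hH'⟩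
    · rw [inter_self]
      exact ⟨hE, Or.inl rfl⟩
    · rw [inter_eq_right.mpr hH]
      exact ⟨hH, Or.inr hH'⟩
    · rw [inter_eq_left.mpr hE]
      exact ⟨hE, Or.inr hE'⟩
    · have hfired : (E, H) ∈ firedPairs 𝓑 Aᶜ Λ x P := mem_firedPairs.mpr ⟨hp, hE', hH'⟩
      exact ⟨inter_subset_left.trans hE, Or.inr (Or.inr ⟨_, hP hfired, subset_rfl⟩)⟩

lemma stageSet_card_empty {A : Set Γ} (hΛ : Covers A 𝓑 Λ) (hA : A ≠ univ) :
    stageSet 𝓑 Aᶜ Λ Λ.card ∅ = A := by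
  ext x
  refine ⟨fun h => by_contra fun hx => mem_of_mem_stageSet (mem_compl hx) h, fun hx => ?_⟩
  have hfix := Finset.isFixedPt_iterate_card Λ (firedPairs_mono (𝓑 := 𝓑) (U := Aᶜ) (x := x))
    fun _ _ hp => (mem_firedPairs.mp hp).1
  exact (mem_stageSet_iff _ _).mpr (empty_mem_upFamily_of_covers hΛ hA hx hfix.eq.subset)

lemma generates_baseSet [Finite Γ] : Generates 𝓑 0 (𝓑 ∪ range (baseSet 𝓑 U)) :=
  generates_zero_self.union_range_sUnion fun _ _ hB => hB.1

lemma Generates.stageStep [Finite Γ] {k : ℕ} {C : Set Γ → Set Γ}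
    (h : Generates 𝓑 k (𝓑 ∪ range C)) :
    Generates 𝓑 (k + Λ.card) (𝓑 ∪ range (stageStep 𝓑 U Λ C)) := by
  have hinter := h.union_image_inter (f := fun p => C p.1) (g := fun p => C p.2) Λ
    (fun p _ => Or.inr ⟨_, rfl⟩) (fun p _ => Or.inr ⟨_, rfl⟩)
  refine (hinter.union_range_sUnion fun W => union_subset ?_ ?_).mono le_rfl
    (union_subset_union_left _ (subset_union_left.trans subset_union_left))
  · exact fun B hB => Or.inl (Or.inl hB.1)
  · exact (image_mono fun p hp => hp.1).trans subset_union_right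

lemma generates_stageSet [Finite Γ] (s : ℕ) :
    Generates 𝓑 (s * Λ.card) (𝓑 ∪ range (stageSet 𝓑 U Λ s)) := by
  induction s with
  | zero => simpa [stageSet] using generates_baseSet
  | succ s ih =>
    rw [stageSet, Function.iterate_succ_apply', Nat.succ_mul]
    exact ih.stageStep

end Stages

theorem dcap_le_card_sq_of_covers {Γ : Type*} [Finite Γ] {𝓑 : Set (Set Γ)} {A : Set Γ}
    {Λ : Finset (Set Γ × Set Γ)} (hΛ : Covers A 𝓑 Λ) (hA₁ : A ≠ ∅) (hA₂ : A ≠ univ) :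
    Dcap A 𝓑 ≤ (Λ.card : ℕ∞) ^ 2 := by
  have hA : A ∈ 𝓑 ∪ range (stageSet 𝓑 Aᶜ Λ Λ.card) :=
    Or.inr ⟨∅, stageSet_card_empty hΛ hA₂⟩
  simpa [sq] using (generates_stageSet Λ.card).dcap_le hA hA₁

lemma exists_covers_card_eq_rho {Γ : Type*} {𝓑 : Set (Set Γ)} {A : Set Γ} (h : rho A 𝓑 ≠ ⊤) :
    ∃ Λ, Covers A 𝓑 Λ ∧ (Λ.card : ℕ∞) = rho A 𝓑 := by
  have hne : {m : ℕ∞ | ∃ Λ, Covers A 𝓑 Λ ∧ m = Λ.card}.Nonempty := by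
    refine nonempty_iff_ne_empty.mpr fun hempty => h ?_
    rw [rho, hempty, sInf_empty]
  obtain ⟨Λ, hΛ, hcard⟩ := csInf_mem hne
  exact ⟨Λ, hΛ, hcard.symm⟩

theorem fusion_upper_bound_general {Γ : Type*} [Fintype Γ]
    (𝓑 : Set (Set Γ))
    (A : Set Γ) (hA₁ : A ≠ ∅) (hA₂ : A ≠ Set.univ) :
    Dcap A 𝓑 ≤ (rho A 𝓑) ^ 2 := by
  rcases eq_or_ne (rho A 𝓑) ⊤ with hrho | hrho
  · simp [hrho]
  obtain ⟨Λ, hΛ, hcard⟩ := exists_covers_card_eq_rho hrho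
  rw [← hcard]
  exact dcap_le_card_sq_of_covers hΛ hA₁ hA₂

/-- Fusion upper bound: for a nonempty finite ground set `Γ`, a
nonempty family `𝓑` of subsets of `Γ`, and a non-trivial `A ⊆ Γ`,
`D_∩(A | 𝓑) ≤ ρ(A, 𝓑)²`. -/
theorem fusion_upper_bound {Γ : Type*} [Fintype Γ] [Nonempty Γ]
    (𝓑 : Set (Set Γ)) (h𝓑 : 𝓑.Nonempty)
    (A : Set Γ) (hA₁ : A ≠ ∅) (hA₂ : A ≠ Set.univ) :
    Dcap A 𝓑 ≤ (rho A 𝓑) ^ 2 :=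
  fusion_upper_bound_general 𝓑 A hA₁ hA₂
end

section
/- Let Γ be a nonempty finite set, let 𝓑 be a nonempty family of subsets of Γ, and let A ⊆ Γ be non-trivial. Then ρ(A, 𝓑) = D°_∩(A | 𝓑); that is, the cover complexity of A with respect to 𝓑 is exactly equal to its cyclic intersection complexity. -/
open Set Filter

/-!
The final value of a syntactic sequence is the least fixed point `K` of its one-step operator.

Given a sequence producing `A`, take for each intersection the pair of final values of its two
arguments, cut down to `Aᶜ`. By fixed-point induction, a semi-filter above `a ∈ A` preserving
these pairs contains `K i ∩ Aᶜ` whenever `a ∈ K i`; at the output this is `A ∩ Aᶜ = ∅`.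

Conversely, given a cover `Λ`, build for every target set `T` a chain of unions collecting every
generator and every gate `E ∩ H` (for `(E, H) ∈ Λ`) whose part outside `A` lies in `T`, and one
intersection gate `chain E ∩ chain H` per pair. The chain for `∅` stays inside `A`, since
`T ∪ A` bounds the chain for `T` from above. If it missed some `a ∈ A`, the sets reached from
inputs containing `a` would form a semi-filter above `a` preserving `Λ`.
-/

open OrderHom (lfp)

section Semantics

variable {ι Γ : Type*}

lemma sumElim_subset_sumElim {V W : ι → Set Γ} (h : V ≤ W) (x : ι ⊕ Set Γ) :
    Sum.elim V id x ⊆ Sum.elim W id x := by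
  cases x with
  | inl i => exact h i
  | inr B => exact subset_rfl

variable (arg1 arg2 : ι → ι ⊕ Set Γ) (ops : ι → Bool)

def evalStep : (ι → Set Γ) →o (ι → Set Γ) where
  toFun V i :=
    if ops i = true then Sum.elim V id (arg1 i) ∩ Sum.elim V id (arg2 i)
    else Sum.elim V id (arg1 i) ∪ Sum.elim V id (arg2 i)
  monotone' V W h i := by
    dsimp only
    split_ifs
    · exact inter_subset_inter (sumElim_subset_sumElim h _) (sumElim_subset_sumElim h _)
    · exact union_subset_union (sumElim_subset_sumElim h _) (sumElim_subset_sumElim h _)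

variable {arg1 arg2 ops}

lemma evalStep_apply_of_true {V : ι → Set Γ} {i : ι} (h : ops i = true) :
    evalStep arg1 arg2 ops V i = Sum.elim V id (arg1 i) ∩ Sum.elim V id (arg2 i) :=
  if_pos h

lemma evalStep_apply_of_false {V : ι → Set Γ} {i : ι} (h : ops i = false) :
    evalStep arg1 arg2 ops V i = Sum.elim V id (arg1 i) ∪ Sum.elim V id (arg2 i) :=
  if_neg (by simp [h])

end Semantics

section CycEval

variable {Γ : Type*} {t : ℕ} (arg1 arg2 : Fin t → Fin t ⊕ Set Γ) (ops : Fin t → Bool)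

lemma cycEval_succ (j : ℕ) :
    cycEval arg1 arg2 ops (j + 1) =
      cycEval arg1 arg2 ops j ⊔ evalStep arg1 arg2 ops (cycEval arg1 arg2 ops j) :=
  rfl

lemma monotone_cycEval : Monotone (cycEval arg1 arg2 ops) :=
  monotone_nat_of_le_succ fun j => by rw [cycEval_succ]; exact le_sup_left

lemma cycEval_le_lfp (j : ℕ) : cycEval arg1 arg2 ops j ≤ lfp (evalStep arg1 arg2 ops) := by
  induction j with
  | zero => exact fun _ => empty_subset _
  | succ j ih => rw [cycEval_succ]; exact sup_le ih (OrderHom.map_le_lfp _ ih)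

lemma exists_cycEval_eq_lfp [Finite Γ] :
    ∃ n, ∀ j ≥ n, cycEval arg1 arg2 ops j = lfp (evalStep arg1 arg2 ops) := by
  obtain ⟨n, hn⟩ : ∃ n, ∀ m, n ≤ m → cycEval arg1 arg2 ops n = cycEval arg1 arg2 ops m :=
    WellFoundedGT.monotone_chain_condition ⟨_, monotone_cycEval arg1 arg2 ops⟩
  refine ⟨n, fun j hj => (cycEval_le_lfp arg1 arg2 ops j).antisymm ?_⟩
  rw [← hn j hj]
  refine OrderHom.lfp_le _ ?_
  calc evalStep arg1 arg2 ops (cycEval arg1 arg2 ops n)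
      ≤ cycEval arg1 arg2 ops (n + 1) := by rw [cycEval_succ]; exact le_sup_right
    _ = cycEval arg1 arg2 ops n := (hn _ n.le_succ).symm

end CycEval

section CoverOfSequence

variable {Γ : Type*} {t : ℕ} (arg1 arg2 : Fin t → Fin t ⊕ Set Γ) (ops : Fin t → Bool)

open Classical in
noncomputable def gatePairs (A : Set Γ) : Finset (Set Γ × Set Γ) :=
  let K := lfp (evalStep arg1 arg2 ops)
  (Finset.univ.filter fun i => ops i = true).image
    fun i => (Sum.elim K id (arg1 i) ∩ Aᶜ, Sum.elim K id (arg2 i) ∩ Aᶜ)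

variable {arg1 arg2 ops} {𝓑 : Set (Set Γ)} {A : Set Γ}

lemma card_gatePairs_le : (gatePairs arg1 arg2 ops A).card ≤ interCount ops :=
  Finset.card_image_le

lemma lfp_inter_compl_mem (hargs : ArgsOK 𝓑 arg1 arg2) {F : Set (Set Γ)} {a : Γ}
    (hF : SemiFilter Aᶜ F) (habove : Above 𝓑 Aᶜ F a)
    (hpres : ∀ p ∈ gatePairs arg1 arg2 ops A, PreservesPair F p) (i : Fin t)
    (ha : a ∈ lfp (evalStep arg1 arg2 ops) i) :
    lfp (evalStep arg1 arg2 ops) i ∩ Aᶜ ∈ F := by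
  set K := lfp (evalStep arg1 arg2 ops)
  have hup : ∀ {S T : Set Γ}, S ∈ F → S ⊆ T ∩ Aᶜ → T ∩ Aᶜ ∈ F := fun hS hST =>
    hF.2.2.1 _ hS _ hST inter_subset_right
  refine (evalStep arg1 arg2 ops).lfp_induction (p := fun V => ∀ i, a ∈ V i → K i ∩ Aᶜ ∈ F)
    (fun V hV _ i ha => ?_) (fun s hs i ha => ?_) i ha
  · have harg : ∀ x : Fin t ⊕ Set Γ, (∀ B, x = .inr B → B ∈ 𝓑) →
        a ∈ Sum.elim V id x → Sum.elim K id x ∩ Aᶜ ∈ F := by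
      rintro (j | B) hB hax
      · exact hV j hax
      · exact habove B (hB B rfl) hax
    have hK : K i = evalStep arg1 arg2 ops K i := by rw [OrderHom.map_lfp]
    cases hop : ops i
    · rw [evalStep_apply_of_false hop] at ha hK
      rcases ha with ha | ha
      · exact hup (harg _ (hargs i).1 ha) (inter_subset_inter_left _ (hK ▸ subset_union_left))
      · exact hup (harg _ (hargs i).2 ha) (inter_subset_inter_left _ (hK ▸ subset_union_right))
    · rw [evalStep_apply_of_true hop] at ha hK
      have hpair : (Sum.elim K id (arg1 i) ∩ Aᶜ, Sum.elim K id (arg2 i) ∩ Aᶜ) ∈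
          gatePairs arg1 arg2 ops A :=
        Finset.mem_image.mpr ⟨i, Finset.mem_filter.mpr ⟨Finset.mem_univ i, hop⟩, rfl⟩
      refine hup (hpres _ hpair (harg _ (hargs i).1 ha.1) (harg _ (hargs i).2 ha.2)) ?_
      rw [hK]
      exact fun y hy => ⟨⟨hy.1.1, hy.2.1⟩, hy.1.2⟩
  · simp only [sSup_apply, iSup_eq_iUnion, mem_iUnion] at ha
    obtain ⟨⟨V, hVs⟩, hV⟩ := ha
    exact hs V hVs i hV

lemma covers_gatePairs (hargs : ArgsOK 𝓑 arg1 arg2) {o : Fin t}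
    (ho : lfp (evalStep arg1 arg2 ops) o = A) : Covers A 𝓑 (gatePairs arg1 arg2 ops A) := by
  refine ⟨?_, ?_⟩
  · intro p hp
    obtain ⟨i, -, rfl⟩ := Finset.mem_image.mp hp
    exact ⟨inter_subset_right, inter_subset_right⟩
  · rintro ⟨F, a, hF, ha, habove, hpres⟩
    have hmem := lfp_inter_compl_mem hargs hF habove hpres o (ho ▸ ha)
    rw [ho, inter_compl_self] at hmem
    exact hF.2.2.2 hmem

lemma rho_le_interCount (hargs : ArgsOK 𝓑 arg1 arg2) {o : Fin t}
    (ho : lfp (evalStep arg1 arg2 ops) o = A) : rho A 𝓑 ≤ interCount ops :=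
  calc rho A 𝓑 ≤ (gatePairs arg1 arg2 ops A).card := sInf_le ⟨_, covers_gatePairs hargs ho, rfl⟩
    _ ≤ interCount ops := by exact_mod_cast card_gatePairs_le

end CoverOfSequence

section Relabel

variable {κ ι Γ : Type*} (e : κ ≃ ι)

def relabelArg (arg : ι → ι ⊕ Set Γ) (k : κ) : κ ⊕ Set Γ := Sum.map e.symm id (arg (e k))

lemma sumElim_relabelArg (arg : ι → ι ⊕ Set Γ) (V : ι → Set Γ) (k : κ) :
    Sum.elim (V ∘ e) id (relabelArg e arg k) = Sum.elim V id (arg (e k)) := by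
  simp only [relabelArg]
  rcases arg (e k) with i | B <;> simp

variable (arg1 arg2 : ι → ι ⊕ Set Γ) (ops : ι → Bool)

lemma evalStep_relabel (V : ι → Set Γ) :
    evalStep (relabelArg e arg1) (relabelArg e arg2) (ops ∘ e) (V ∘ e) =
      evalStep arg1 arg2 ops V ∘ e := by
  ext1 k
  simp only [evalStep, OrderHom.coe_mk, Function.comp_apply, sumElim_relabelArg]
  rfl

lemma lfp_evalStep_relabel :
    lfp (evalStep (relabelArg e arg1) (relabelArg e arg2) (ops ∘ e)) =
      lfp (evalStep arg1 arg2 ops) ∘ e := by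
  refine (OrderHom.lfp_le _ ?_).antisymm ?_
  · rw [evalStep_relabel, OrderHom.map_lfp]
  · set K' := lfp (evalStep (relabelArg e arg1) (relabelArg e arg2) (ops ∘ e))
    have hfix : evalStep arg1 arg2 ops (K' ∘ e.symm) = K' ∘ e.symm := by
      have h := evalStep_relabel e arg1 arg2 ops (K' ∘ e.symm)
      rw [Function.comp_assoc, Equiv.symm_comp_self, Function.comp_id, OrderHom.map_lfp] at h
      ext1 i
      simpa using (congrFun h (e.symm i)).symm
    intro k
    simpa using OrderHom.lfp_le _ hfix.le (e k)

end Relabel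

lemma exists_equiv_fin_last {ι : Type*} [Finite ι] (o : ι) :
    ∃ (t : ℕ) (e : Fin (t + 1) ≃ ι), e (Fin.last t) = o := by
  classical
  have : Nonempty ι := ⟨o⟩
  obtain ⟨t, ht⟩ := Nat.exists_eq_succ_of_ne_zero (Nat.card_pos (α := ι)).ne'
  let e₀ : Fin (t + 1) ≃ ι := ((Finite.equivFin ι).trans (finCongr ht)).symm
  exact ⟨t, e₀.trans (Equiv.swap (e₀ (Fin.last t)) o), Equiv.swap_apply_left _ _⟩

lemma dcapCyc_le_of_lfp_eq {ι Γ : Type*} [Finite ι] [Finite Γ] {arg1 arg2 : ι → ι ⊕ Set Γ}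
    {ops : ι → Bool} {𝓑 : Set (Set Γ)} {A : Set Γ}
    (hargs : ∀ i B, arg1 i = .inr B ∨ arg2 i = .inr B → B ∈ 𝓑) {o : ι}
    (ho : lfp (evalStep arg1 arg2 ops) o = A) :
    DcapCyc A 𝓑 ≤ Nat.card {i // ops i = true} := by
  obtain ⟨t, e, he⟩ := exists_equiv_fin_last o
  obtain ⟨n, hn⟩ := exists_cycEval_eq_lfp (relabelArg e arg1) (relabelArg e arg2) (ops ∘ e)
  have hrelabel : ∀ (arg : ι → ι ⊕ Set Γ) k B, relabelArg e arg k = .inr B → arg (e k) = .inr B :=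
    fun arg k B h => by rcases harg : arg (e k) <;> simp_all [relabelArg]
  have hcount : interCount (ops ∘ e) = Nat.card {i // ops i = true} := by
    rw [interCount, ← Fintype.card_subtype, ← Nat.card_eq_fintype_card]
    exact Nat.card_congr (e.subtypeEquiv fun _ => Iff.rfl)
  refine sInf_le ⟨t, relabelArg e arg1, relabelArg e arg2, ops ∘ e,
    fun k => ⟨fun B h => hargs _ B (.inl (hrelabel _ k B h)),
      fun B h => hargs _ B (.inr (hrelabel _ k B h))⟩,
    ⟨n, fun j hj => ?_⟩, by rw [hcount]⟩
  rw [hn j hj, lfp_evalStep_relabel, Function.comp_apply, he, ho]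

namespace CoverCircuit

variable {Γ : Type*} (𝓑 : Set (Set Γ)) (A : Set Γ) (Λ : Finset (Set Γ × Set Γ))

/-- What a union chain may collect: the intersection gate of a pair of `Λ`, or a generator. -/
abbrev Input := Λ ⊕ 𝓑

/-- A union chain for every target set `T`, of length one more than the number of inputs,
followed by one intersection gate for every pair of `Λ`. -/
abbrev Node := (Set Γ × Fin (Nat.card (Input 𝓑 Λ) + 1)) ⊕ Λ

variable {𝓑 Λ}

def Input.content : Input 𝓑 Λ → Set Γ := Sum.elim (fun p => p.1.1 ∩ p.1.2) Subtype.val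

def Input.toArg : Input 𝓑 Λ → Node 𝓑 Λ ⊕ Set Γ := Sum.map Sum.inr Subtype.val

lemma Input.mem_of_toArg_eq_inr {x : Input 𝓑 Λ} {B : Set Γ} (h : x.toArg = .inr B) : B ∈ 𝓑 := by
  rcases x with p | ⟨B', hB'⟩
  · cases h
  · cases h
    exact hB'

variable (𝓑 Λ)

noncomputable def chainHead (T : Set Γ) : Node 𝓑 Λ := .inl (T, 0)

/-- The last node of a chain is its own successor. -/
noncomputable def chainNext (T : Set Γ) (k : Fin (Nat.card (Input 𝓑 Λ) + 1)) : Node 𝓑 Λ :=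
  .inl (T, ⟨min ((k : ℕ) + 1) (Nat.card (Input 𝓑 Λ)), Nat.lt_succ_of_le (min_le_right _ _)⟩)

noncomputable def arg1 : Node 𝓑 Λ → Node 𝓑 Λ ⊕ Set Γ
  | .inl (T, k) => .inl (chainNext 𝓑 Λ T k)
  | .inr p => .inl (chainHead 𝓑 Λ p.1.1)

open Classical in
noncomputable def arg2 [Finite Γ] : Node 𝓑 Λ → Node 𝓑 Λ ⊕ Set Γ
  | .inl (T, k) =>
    if h : (k : ℕ) < Nat.card (Input 𝓑 Λ) then
      let x := (Finite.equivFin (Input 𝓑 Λ)).symm ⟨k, h⟩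
      if x.content ∩ Aᶜ ⊆ T then x.toArg else .inl (chainNext 𝓑 Λ T k)
    else .inl (chainNext 𝓑 Λ T k)
  | .inr p => .inl (chainHead 𝓑 Λ p.1.2)

def bound : Node 𝓑 Λ → Set Γ := Sum.elim (fun c => c.1 ∪ A) (fun p => p.1.1 ∩ p.1.2 ∪ A)

lemma sumElim_bound_toArg_subset (x : Input 𝓑 Λ) :
    Sum.elim (bound 𝓑 A Λ) id x.toArg ⊆ x.content ∪ A := by
  rcases x with p | B
  · exact subset_rfl
  · exact subset_union_left

variable [Finite Γ]

noncomputable def value : Node 𝓑 Λ → Set Γ := lfp (evalStep (arg1 𝓑 Λ) (arg2 𝓑 A Λ) Sum.isRight)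

lemma value_chain (T : Set Γ) (k : Fin (Nat.card (Input 𝓑 Λ) + 1)) :
    value 𝓑 A Λ (.inl (T, k)) =
      value 𝓑 A Λ (chainNext 𝓑 Λ T k) ∪ Sum.elim (value 𝓑 A Λ) id (arg2 𝓑 A Λ (.inl (T, k))) := by
  conv_lhs => rw [value, ← OrderHom.map_lfp]
  exact evalStep_apply_of_false rfl

lemma value_gate (p : Λ) :
    value 𝓑 A Λ (.inr p) =
      value 𝓑 A Λ (chainHead 𝓑 Λ p.1.1) ∩ value 𝓑 A Λ (chainHead 𝓑 Λ p.1.2) := by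
  conv_lhs => rw [value, ← OrderHom.map_lfp]
  exact evalStep_apply_of_true rfl

lemma value_chainNext_subset (T : Set Γ) (k : Fin (Nat.card (Input 𝓑 Λ) + 1)) :
    value 𝓑 A Λ (chainNext 𝓑 Λ T k) ⊆ value 𝓑 A Λ (.inl (T, k)) := by
  rw [value_chain]
  exact subset_union_left

lemma value_chain_subset_head (T : Set Γ) (k : Fin (Nat.card (Input 𝓑 Λ) + 1)) :
    value 𝓑 A Λ (.inl (T, k)) ⊆ value 𝓑 A Λ (chainHead 𝓑 Λ T) := by
  obtain ⟨k, hk⟩ := k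
  induction k with
  | zero => exact subset_rfl
  | succ k ih =>
    have hnext : chainNext 𝓑 Λ T ⟨k, by omega⟩ = .inl (T, ⟨k + 1, hk⟩) := by
      simp only [chainNext, Sum.inl.injEq, Prod.mk.injEq, Fin.mk.injEq, true_and]
      omega
    exact (hnext ▸ value_chainNext_subset 𝓑 A Λ T _).trans (ih _)

lemma toArg_subset_value_head {x : Input 𝓑 Λ} {T : Set Γ} (hx : x.content ∩ Aᶜ ⊆ T) :
    Sum.elim (value 𝓑 A Λ) id x.toArg ⊆ value 𝓑 A Λ (chainHead 𝓑 Λ T) := by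
  obtain ⟨⟨k, hk⟩, rfl⟩ := (Finite.equivFin (Input 𝓑 Λ)).symm.surjective x
  refine subset_trans ?_ (value_chain_subset_head 𝓑 A Λ T ⟨k, by omega⟩)
  rw [value_chain]
  refine subset_union_of_subset_right ?_ _
  simp only [arg2, dif_pos hk, if_pos hx]
  exact subset_rfl

lemma evalStep_bound_le :
    evalStep (arg1 𝓑 Λ) (arg2 𝓑 A Λ) Sum.isRight (bound 𝓑 A Λ) ≤ bound 𝓑 A Λ := by
  rintro (⟨T, k⟩ | p)
  · rw [evalStep_apply_of_false rfl]
    refine union_subset subset_rfl ?_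
    simp only [arg2]
    split_ifs with hk hx
    · refine (sumElim_bound_toArg_subset 𝓑 A Λ _).trans fun y hy => ?_
      by_cases hyA : y ∈ A
      · exact .inr hyA
      · exact .inl (hx ⟨hy.resolve_right hyA, hyA⟩)
    all_goals exact subset_rfl
  · rw [evalStep_apply_of_true rfl]
    show (p.1.1 ∪ A) ∩ (p.1.2 ∪ A) ⊆ p.1.1 ∩ p.1.2 ∪ A
    exact (inter_union_distrib_right _ _ _).symm.subset

lemma value_head_empty_subset : value 𝓑 A Λ (chainHead 𝓑 Λ ∅) ⊆ A := by
  have h := OrderHom.lfp_le _ (evalStep_bound_le 𝓑 A Λ) (chainHead 𝓑 Λ ∅)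
  rwa [bound, chainHead, Sum.elim_inl, empty_union] at h

def reachFilter (a : Γ) : Set (Set Γ) :=
  {S | S ⊆ Aᶜ ∧ (S = Aᶜ ∨
    ∃ x : Input 𝓑 Λ, x.content ∩ Aᶜ ⊆ S ∧ a ∈ Sum.elim (value 𝓑 A Λ) id x.toArg)}

variable {𝓑 A Λ}

lemma eq_compl_or_mem_value_head {a : Γ} {S : Set Γ} (hS : S ∈ reachFilter 𝓑 A Λ a) :
    S = Aᶜ ∨ a ∈ value 𝓑 A Λ (chainHead 𝓑 Λ S) :=
  hS.2.imp_right fun ⟨_, hx, hax⟩ => toArg_subset_value_head 𝓑 A Λ hx hax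

lemma semiFilter_reachFilter (hA : A ≠ univ) {a : Γ}
    (ha : a ∉ value 𝓑 A Λ (chainHead 𝓑 Λ ∅)) : SemiFilter Aᶜ (reachFilter 𝓑 A Λ a) := by
  refine ⟨⟨Aᶜ, subset_rfl, .inl rfl⟩, fun S hS => hS.1, ?_, fun h => ?_⟩
  · rintro S ⟨-, rfl | ⟨x, hx, hax⟩⟩ T hST hT
    · exact ⟨hT, .inl (hT.antisymm hST)⟩
    · exact ⟨hT, .inr ⟨x, hx.trans hST, hax⟩⟩
  · rcases eq_compl_or_mem_value_head h with h | h
    · exact hA (compl_empty_iff.mp h.symm)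
    · exact ha h

lemma above_reachFilter (a : Γ) : Above 𝓑 Aᶜ (reachFilter 𝓑 A Λ a) a :=
  fun B hB haB => ⟨inter_subset_right, .inr ⟨.inr ⟨B, hB⟩, subset_rfl, haB⟩⟩

lemma preservesPair_reachFilter {a : Γ} {p : Set Γ × Set Γ} (hp : p ∈ Λ) :
    PreservesPair (reachFilter 𝓑 A Λ a) p := by
  intro hE hH
  rcases eq_compl_or_mem_value_head hE with h₁ | h₁
  · rwa [h₁, inter_eq_right.mpr hH.1]
  rcases eq_compl_or_mem_value_head hH with h₂ | h₂
  · rwa [h₂, inter_eq_left.mpr hE.1]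
  refine ⟨inter_subset_left.trans hE.1, .inr ⟨.inl ⟨p, hp⟩, inter_subset_left, ?_⟩⟩
  show a ∈ value 𝓑 A Λ (.inr ⟨p, hp⟩)
  rw [value_gate]
  exact ⟨h₁, h₂⟩

lemma value_head_empty (hcov : Covers A 𝓑 Λ) (hA : A ≠ univ) :
    value 𝓑 A Λ (chainHead 𝓑 Λ ∅) = A := by
  refine (value_head_empty_subset 𝓑 A Λ).antisymm fun a ha => ?_
  by_contra hna
  exact hcov.2 ⟨reachFilter 𝓑 A Λ a, a, semiFilter_reachFilter hA hna, ha, above_reachFilter a,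
    fun p hp => preservesPair_reachFilter hp⟩

lemma mem_of_arg_eq_inr {i : Node 𝓑 Λ} {B : Set Γ}
    (h : arg1 𝓑 Λ i = .inr B ∨ arg2 𝓑 A Λ i = .inr B) : B ∈ 𝓑 := by
  rcases i with ⟨T, k⟩ | p
  · simp only [arg1, arg2, reduceCtorEq, false_or] at h
    split_ifs at h
    exact Input.mem_of_toArg_eq_inr h
  · simp [arg1, arg2] at h

end CoverCircuit

lemma dcapCyc_le_card {Γ : Type*} [Finite Γ] {𝓑 : Set (Set Γ)} {A : Set Γ}
    {Λ : Finset (Set Γ × Set Γ)} (hcov : Covers A 𝓑 Λ) (hA : A ≠ univ) :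
    DcapCyc A 𝓑 ≤ Λ.card :=
  calc DcapCyc A 𝓑 ≤ Nat.card {x : CoverCircuit.Node 𝓑 Λ // x.isRight = true} :=
        dcapCyc_le_of_lfp_eq (fun _ _ => CoverCircuit.mem_of_arg_eq_inr)
          (CoverCircuit.value_head_empty hcov hA)
    _ = Λ.card := by rw [Nat.card_congr Equiv.sumIsRight, Nat.card_eq_finsetCard]

theorem cover_eq_cyclic_inter_general {Γ : Type*} [Fintype Γ]
    (𝓑 : Set (Set Γ))
    (A : Set Γ) (hA₂ : A ≠ Set.univ) :
    rho A 𝓑 = DcapCyc A 𝓑 := by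
  refine le_antisymm (le_sInf ?_) (le_sInf ?_)
  · rintro _ ⟨t, arg1, arg2, ops, hargs, ⟨j, hj⟩, rfl⟩
    obtain ⟨n, hn⟩ := exists_cycEval_eq_lfp arg1 arg2 ops
    refine rho_le_interCount hargs (o := Fin.last t) ?_
    rw [← hn (max j n) (le_max_right _ _), hj _ (le_max_left _ _)]
  · rintro _ ⟨Λ, hcov, rfl⟩
    exact dcapCyc_le_card hcov hA₂

/-- Exact characterization of cover complexity: for a nonempty
finite ground set `Γ`, a nonempty family `𝓑`, and a non-trivial `A ⊆ Γ`,
`ρ(A, 𝓑) = D°_∩(A | 𝓑)`. -/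
theorem cover_eq_cyclic_inter {Γ : Type*} [Fintype Γ] [Nonempty Γ]
    (𝓑 : Set (Set Γ)) (h𝓑 : 𝓑.Nonempty)
    (A : Set Γ) (hA₁ : A ≠ ∅) (hA₂ : A ≠ Set.univ) :
    rho A 𝓑 = DcapCyc A 𝓑 :=
  cover_eq_cyclic_inter_general 𝓑 A hA₂
end

section
/- There exist constants c₁, c₂ > 0 such that, for G chosen uniformly at random among all subsets of [N] × [N], the probability that c₁ · N ≤ ρ(G, 𝓖_{N,N}) ≤ c₂ · N tends to 1 as N → ∞; that is, a random bipartite graph asymptotically almost surely has cover complexity Θ(N) with respect to the graph-complexity generators. -/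
open Set Filter

/-!
Upper bound: for each row `i`, the pair `(R_i ∩ Ḡ, ⋃_{(i, j) ∈ G} C_j ∩ Ḡ)` has empty meet, and a
semi-filter above an edge `(i, j)` contains both of its sets; so these `N` pairs cover `G`.

Lower bound, by counting: if `Λ` covers `G`, then `w ∈ G` iff `∅` is forced into every semi-filter
that contains `R_{w.1} ∩ Ḡ` and `C_{w.2} ∩ Ḡ` and preserves `Λ`. Whether that happens depends only
on which of the `2N + |Λ|` sets `R_i ∩ Ḡ`, `C_j ∩ Ḡ`, `E ∩ H` are empty and which of them lie below
which of the `2|Λ|` sets `E`, `H`. Hence at most `2 ^ ((2|Λ| + 1)(2N + |Λ|))` graphs have a cover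
of size `|Λ|`, a vanishing fraction of all `2 ^ (N²)` graphs once `|Λ| ≤ N / 100`.
-/

section Reachability

variable {Γ α κ : Type*}

def meetAtom (atom : α → Set Γ) (e : κ → Set Γ × Set Γ) : α ⊕ κ → Set Γ :=
  Sum.elim atom fun k => (e k).1 ∩ (e k).2

abbrev PairTrace (α κ : Type*) := (κ → Set (α ⊕ κ) × Set (α ⊕ κ)) × Set (α ⊕ κ)

def pairTrace (atom : α → Set Γ) (e : κ → Set Γ × Set Γ) : PairTrace α κ :=
  (fun k => ({x | meetAtom atom e x ⊆ (e k).1}, {x | meetAtom atom e x ⊆ (e k).2}),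
    {x | meetAtom atom e x = ∅})

/-- The indices of the sets forced into every semi-filter that contains the `start` atoms and
preserves the pairs, read off from their trace alone. -/
inductive Reachable (start : Set α) (below : κ → Set (α ⊕ κ) × Set (α ⊕ κ)) :
    α ⊕ κ → Prop
  | start {a : α} : a ∈ start → Reachable start below (.inl a)
  | meet {k : κ} {x y : α ⊕ κ} : Reachable start below x → x ∈ (below k).1 →
      Reachable start below y → y ∈ (below k).2 → Reachable start below (.inr k)

def ReachesEmpty (start : Set α) (d : PairTrace α κ) : Prop :=
  ∃ x, Reachable start d.1 x ∧ x ∈ d.2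

variable {atom : α → Set Γ} {e : κ → Set Γ × Set Γ} {start : Set α}

/- The sets above a reachable index form a semi-filter that is above `a` and preserves `Λ`;
a cover forbids that unless it contains `∅`. -/
theorem reachesEmpty_of_covers {A : Set Γ} {𝓑 : Set (Set Γ)} {Λ : Finset (Set Γ × Set Γ)}
    (hΛ : Covers A 𝓑 Λ) (he : ↑Λ ⊆ range e) {a : Γ} (ha : a ∈ A) (haB : ∃ B ∈ 𝓑, a ∈ B)
    (hstart : ∀ B ∈ 𝓑, a ∈ B → ∃ i ∈ start, atom i = B ∩ Aᶜ) :
    ReachesEmpty start (pairTrace atom e) := by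
  by_contra hne
  have hreach_ne : ∀ x, Reachable start (pairTrace atom e).1 x → meetAtom atom e x ≠ ∅ :=
    fun x hx hx0 => hne ⟨x, hx, hx0⟩
  let F : Set (Set Γ) :=
    {S | S ⊆ Aᶜ ∧ ∃ x, Reachable start (pairTrace atom e).1 x ∧ meetAtom atom e x ⊆ S}
  have habove : Above 𝓑 Aᶜ F a := by
    intro B hB haB
    obtain ⟨i, hi, hiB⟩ := hstart B hB haB
    exact ⟨inter_subset_right, .inl i, .start hi, hiB.le⟩
  refine hΛ.2 ⟨F, a, ⟨?_, fun S hS => hS.1, ?_, ?_⟩, ha, habove, ?_⟩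
  · obtain ⟨B, hB, haB⟩ := haB
    exact ⟨_, habove B hB haB⟩
  · rintro S ⟨-, x, hx, hxS⟩ T hST hT
    exact ⟨hT, x, hx, hxS.trans hST⟩
  · rintro ⟨-, x, hx, hx0⟩
    exact hreach_ne x hx (subset_empty_iff.mp hx0)
  · rintro p hp ⟨-, x, hx, hxp⟩ ⟨-, y, hy, hyp⟩
    obtain ⟨k, rfl⟩ := he hp
    exact ⟨fun _ hz => (hΛ.1 _ hp).1 hz.1, .inr k, .meet hx hxp hy hyp, subset_rfl⟩

theorem mem_meetAtom_of_reachable {w : Γ} (hw : ∀ i ∈ start, w ∈ atom i) {x : α ⊕ κ}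
    (hx : Reachable start (pairTrace atom e).1 x) : w ∈ meetAtom atom e x := by
  induction hx with
  | start hi => exact hw _ hi
  | meet _ hxk _ hyk ihx ihy => exact ⟨hxk ihx, hyk ihy⟩

theorem eq_setOf_reachesEmpty_of_covers {A : Set Γ} {𝓑 : Set (Set Γ)}
    {Λ : Finset (Set Γ × Set Γ)} (hΛ : Covers A 𝓑 Λ) (he : ↑Λ ⊆ range e)
    {start : Γ → Set α} (hgen : ∀ w, ∃ B ∈ 𝓑, w ∈ B)
    (hstart : ∀ w, ∀ B ∈ 𝓑, w ∈ B → ∃ i ∈ start w, atom i = B ∩ Aᶜ)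
    (hmem : ∀ w ∉ A, ∀ i ∈ start w, w ∈ atom i) :
    A = {w | ReachesEmpty (start w) (pairTrace atom e)} := by
  ext w
  refine ⟨fun hw => reachesEmpty_of_covers hΛ he hw (hgen w) (hstart w), ?_⟩
  rintro ⟨x, hx, hx0⟩
  by_contra hw
  have hwx : w ∈ meetAtom atom e x := mem_meetAtom_of_reachable (hmem w hw) hx
  rw [show meetAtom atom e x = ∅ from hx0] at hwx
  exact hwx

end Reachability

theorem rho_le_of_covers {Γ : Type*} {A : Set Γ} {𝓑 : Set (Set Γ)} {Λ : Finset (Set Γ × Set Γ)}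
    (h : Covers A 𝓑 Λ) : rho A 𝓑 ≤ Λ.card :=
  sInf_le ⟨Λ, h, rfl⟩

theorem exists_covers_card_lt_of_rho_lt {Γ : Type*} {A : Set Γ} {𝓑 : Set (Set Γ)} {n : ℕ∞}
    (h : rho A 𝓑 < n) : ∃ Λ, Covers A 𝓑 Λ ∧ (Λ.card : ℕ∞) < n := by
  obtain ⟨_, ⟨Λ, hΛ, rfl⟩, hlt⟩ := sInf_lt_iff.mp h
  exact ⟨Λ, hΛ, hlt⟩

theorem Finset.exists_fin_subset_range {β : Type*} [Nonempty β] (s : Finset β) {n : ℕ}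
    (hn : s.card ≤ n) : ∃ e : Fin n → β, ↑s ⊆ Set.range e := by
  refine ⟨Function.extend (Fin.castLE hn) (fun i => (s.equivFin.symm i : β))
    fun _ => Classical.arbitrary β, fun p hp => ⟨Fin.castLE hn (s.equivFin ⟨p, hp⟩), ?_⟩⟩
  simp [(Fin.castLE_injective hn).extend_apply]

section GraphGens

variable {N : ℕ}

/-- The pair `(R_i ∩ Ḡ, ⋃_{(i, j) ∈ G} C_j ∩ Ḡ)`. -/
def rowPair (G : Set (Fin N × Fin N)) (i : Fin N) :
    Set (Fin N × Fin N) × Set (Fin N × Fin N) :=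
  (rowSet N N i ∩ Gᶜ, {p | p ∉ G ∧ (i, p.2) ∈ G})

theorem covers_image_rowPair (G : Set (Fin N × Fin N)) :
    Covers G (graphGens N N) (Finset.univ.image (rowPair G)) := by
  refine ⟨?_, ?_⟩
  · simp only [Finset.mem_image, Finset.mem_univ, true_and]
    rintro _ ⟨i, rfl⟩
    exact ⟨inter_subset_right, fun _ hp => hp.1⟩
  · rintro ⟨F, a, ⟨-, -, hup, hF0⟩, haG, habove, hpres⟩
    have hrow : (rowPair G a.1).1 ∈ F := habove _ (.inl ⟨a.1, rfl⟩) rfl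
    have hcol : (rowPair G a.1).2 ∈ F := by
      refine hup _ (habove _ (.inr ⟨a.2, rfl⟩) rfl) _ ?_ fun _ hp => hp.1
      rintro p ⟨hp2 : p.2 = a.2, hpG⟩
      exact ⟨hpG, by rwa [hp2]⟩
    have hdisj : (rowPair G a.1).1 ∩ (rowPair G a.1).2 = ∅ := by
      refine eq_empty_iff_forall_notMem.mpr ?_
      rintro p ⟨⟨hp1 : p.1 = a.1, hpG⟩, -, hpG'⟩
      exact hpG (by rwa [← hp1] at hpG')
    exact hF0 (hdisj ▸ hpres _ (Finset.mem_image_of_mem _ (Finset.mem_univ _)) hrow hcol)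

theorem rho_graphGens_le (G : Set (Fin N × Fin N)) : rho G (graphGens N N) ≤ N :=
  (rho_le_of_covers (covers_image_rowPair G)).trans <| by
    exact_mod_cast Finset.card_image_le.trans (Finset.card_univ.trans (Fintype.card_fin N)).le

def rowColAtom (N : ℕ) (U : Set (Fin N × Fin N)) : Fin N ⊕ Fin N → Set (Fin N × Fin N) :=
  Sum.elim (fun i => rowSet N N i ∩ U) fun j => colSet N N j ∩ U

def rowColStart (w : Fin N × Fin N) : Set (Fin N ⊕ Fin N) := {.inl w.1, .inr w.2}

theorem eq_setOf_reachesEmpty_rowCol {κ : Type*} {G : Set (Fin N × Fin N)}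
    {Λ : Finset (Set (Fin N × Fin N) × Set (Fin N × Fin N))}
    (hΛ : Covers G (graphGens N N) Λ) {e : κ → Set (Fin N × Fin N) × Set (Fin N × Fin N)}
    (he : ↑Λ ⊆ range e) :
    G = {w | ReachesEmpty (rowColStart w) (pairTrace (rowColAtom N Gᶜ) e)} := by
  refine eq_setOf_reachesEmpty_of_covers hΛ he (fun w => ⟨_, .inl ⟨w.1, rfl⟩, rfl⟩) ?_ ?_
  · rintro w _ (⟨i, rfl⟩ | ⟨j, rfl⟩) (hw : _ = _)
    · exact ⟨.inl i, by simp [rowColStart, ← hw], rfl⟩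
    · exact ⟨.inr j, by simp [rowColStart, ← hw], rfl⟩
  · rintro w hw _ (rfl | rfl)
    exacts [⟨rfl, hw⟩, ⟨rfl, hw⟩]

theorem ncard_setOf_covers_card_le (N T : ℕ) :
    {G : Finset (Fin N × Fin N) |
        ∃ Λ, Covers (↑G : Set (Fin N × Fin N)) (graphGens N N) Λ ∧ Λ.card ≤ T}.ncard ≤
      2 ^ ((2 * T + 1) * (2 * N + T)) := by
  classical
  let decode : PairTrace (Fin N ⊕ Fin N) (Fin T) → Finset (Fin N × Fin N) :=
    fun d => Finset.univ.filter fun w => ReachesEmpty (rowColStart w) d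
  have hsub : {G : Finset (Fin N × Fin N) |
      ∃ Λ, Covers (↑G : Set (Fin N × Fin N)) (graphGens N N) Λ ∧ Λ.card ≤ T} ⊆
      range decode := by
    rintro G ⟨Λ, hΛ, hcard⟩
    obtain ⟨e, he⟩ := Λ.exists_fin_subset_range hcard
    refine ⟨pairTrace (rowColAtom N (↑G)ᶜ) e, Finset.coe_injective ?_⟩
    ext w
    simpa [decode] using (Set.ext_iff.mp (eq_setOf_reachesEmpty_rowCol hΛ he) w).symm
  calc _ ≤ (range decode).ncard := ncard_le_ncard hsub (toFinite _)
    _ ≤ Nat.card (PairTrace (Fin N ⊕ Fin N) (Fin T)) :=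
      (Nat.card_coe_set_eq _).symm.le.trans (Finite.card_range_le _)
    _ = 2 ^ ((2 * T + 1) * (2 * N + T)) := by
      simp only [PairTrace, Nat.card_eq_fintype_card, Fintype.card_prod, Fintype.card_fun,
        Fintype.card_set, Fintype.card_sum, Fintype.card_fin, ← pow_add, ← pow_mul]
      ring_nf

end GraphGens

theorem ENat.le_floor_of_toENNReal_lt_ofReal {m : ℕ∞} {x : ℝ} (h : m.toENNReal < .ofReal x) :
    m ≤ ⌊x⌋₊ := by
  lift m to ℕ using fun hm => by simp [hm] at h
  exact_mod_cast Nat.le_floor (ENNReal.natCast_lt_ofReal.mp (by simpa using h)).le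

theorem compl_setOf_rho_mem_Icc_subset {N : ℕ} {x y : ℝ} (hy : (N : ℝ) ≤ y) :
    {G : Finset (Fin N × Fin N) |
        ENNReal.ofReal x ≤ ENat.toENNReal (rho (↑G : Set (Fin N × Fin N)) (graphGens N N)) ∧
        ENat.toENNReal (rho (↑G : Set (Fin N × Fin N)) (graphGens N N)) ≤ ENNReal.ofReal y}ᶜ ⊆
      {G | ∃ Λ, Covers (↑G : Set (Fin N × Fin N)) (graphGens N N) Λ ∧ Λ.card ≤ ⌊x⌋₊} := by
  intro G hG
  have hup : ENat.toENNReal (rho (↑G : Set (Fin N × Fin N)) (graphGens N N)) ≤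
      ENNReal.ofReal y :=
    (ENat.toENNReal_le.mpr (rho_graphGens_le _)).trans
      (by simpa using ENNReal.ofReal_le_ofReal hy)
  have hlow := ENat.le_floor_of_toENNReal_lt_ofReal (not_le.mp fun hlow => hG ⟨hlow, hup⟩)
  obtain ⟨Λ, hΛ, hcard⟩ := exists_covers_card_lt_of_rho_lt
    (hlow.trans_lt (ENat.natCast_lt_natCast.mpr (⌊x⌋₊).lt_succ_self))
  exact ⟨Λ, hΛ, Nat.lt_succ_iff.mp (by exact_mod_cast hcard)⟩

theorem tendsto_ncard_div_natCard_of_ncard_compl_mul_le {β : ℕ → Type*} [∀ N, Finite (β N)]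
    [∀ N, Nonempty (β N)] {E : ∀ N, Set (β N)}
    (h : ∀ᶠ N in atTop, (E N)ᶜ.ncard * 2 ^ N ≤ Nat.card (β N)) :
    Tendsto (fun N => ((E N).ncard : ℝ) / Nat.card (β N)) atTop (nhds 1) := by
  have hpos : ∀ N, (0 : ℝ) < Nat.card (β N) := fun N => by exact_mod_cast Nat.card_pos
  have hsum : ∀ N, ((E N).ncard : ℝ) + (E N)ᶜ.ncard = Nat.card (β N) := fun N => by
    exact_mod_cast ncard_add_ncard_compl (E N)
  refine tendsto_of_tendsto_of_tendsto_of_le_of_le' (g := fun N => 1 - (1 / 2 : ℝ) ^ N)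
    (by simpa using (tendsto_pow_atTop_nhds_zero_of_lt_one (by norm_num : (0 : ℝ) ≤ 1 / 2)
      (by norm_num)).const_sub 1) tendsto_const_nhds ?_ (.of_forall fun N => ?_)
  · filter_upwards [h] with N hN
    have hN' : ((E N)ᶜ.ncard : ℝ) * 2 ^ N ≤ Nat.card (β N) := by exact_mod_cast hN
    rw [le_div_iff₀ (hpos N), one_div, inv_pow, sub_mul, one_mul, ← div_eq_inv_mul,
      sub_le_iff_le_add, ← sub_le_iff_le_add', le_div_iff₀ (by positivity),
      show (Nat.card (β N) : ℝ) - (E N).ncard = (E N)ᶜ.ncard by linarith [hsum N]]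
    exact hN'
  · rw [div_le_one (hpos N)]
    linarith [hsum N, ((E N)ᶜ.ncard).cast_nonneg (α := ℝ)]

/-- Cover complexity of a random graph: there are constants
`c₁, c₂ > 0` such that, for `G` a uniformly random subset of `[N] × [N]`, the
probability that `c₁·N ≤ ρ(G, 𝓖_{N,N}) ≤ c₂·N` tends to `1` as `N → ∞`. -/
theorem cover_complexity_random_graph :
    ∃ c₁ c₂ : ℝ, 0 < c₁ ∧ 0 < c₂ ∧
      Filter.Tendsto
        (fun N : ℕ =>
          (({G : Finset (Fin N × Fin N) |
              ENNReal.ofReal (c₁ * N) ≤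
                ENat.toENNReal (rho (↑G : Set (Fin N × Fin N)) (graphGens N N)) ∧
              ENat.toENNReal (rho (↑G : Set (Fin N × Fin N)) (graphGens N N)) ≤
                ENNReal.ofReal (c₂ * N)}).ncard : ℝ) / (2 : ℝ) ^ (N * N))
        Filter.atTop (nhds 1) := by
  refine ⟨1 / 100, 1, by norm_num, one_pos, ?_⟩
  have hcard (N : ℕ) : Nat.card (Finset (Fin N × Fin N)) = 2 ^ (N * N) := by
    simp [Nat.card_eq_fintype_card, Fintype.card_finset]
  simp_rw [← Nat.cast_ofNat (R := ℝ) (n := 2), ← Nat.cast_pow, ← hcard]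
  refine tendsto_ncard_div_natCard_of_ncard_compl_mul_le ?_
  filter_upwards [eventually_ge_atTop 4] with N hN
  set T := ⌊1 / 100 * (N : ℝ)⌋₊
  have hT : 100 * T ≤ N := by
    have := Nat.floor_le (a := 1 / 100 * (N : ℝ)) (by positivity)
    exact_mod_cast (by linarith : (100 * T : ℝ) ≤ N)
  calc _ ≤ 2 ^ ((2 * T + 1) * (2 * N + T)) * 2 ^ N :=
        Nat.mul_le_mul_right _ <| (ncard_le_ncard (compl_setOf_rho_mem_Icc_subset (by simp))
          (toFinite _)).trans (ncard_setOf_covers_card_le N T)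
    _ ≤ 2 ^ (N * N) := by
      rw [← pow_add]
      exact Nat.pow_le_pow_right two_pos (by nlinarith)
    _ = _ := (hcard N).symm
end

section
/- Let N = 2^n and let G ⊆ [N] × [N] be a non-trivial bipartite graph. Then ρ(G, 𝓖_{N,N}) ≤ ρ(φ(G), 𝓑_{2n}); that is, the cover complexity of G with respect to the graph-complexity generators is at most the cover complexity of the associated Boolean function f_G with respect to the circuit-complexity generators. -/
open Set Filter

/-!
A semi-filter `F` over `Ḡ` pushes forward along the injection `φ` to the semi-filter
`{S ⊆ φ(G)ᶜ | φ⁻¹ S ∈ F}`, which preserves a pair `(E, H)` whenever `F` preserves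
`(φ⁻¹ E, φ⁻¹ H)`. If `F` is above an edge `(u, v)`, the push-forward is above `φ(u, v)`:
the first `n` bits of `φ` are constant on the row star `R_u` and the last `n` on the column
star `C_v`, so every generator `B_j` or `B_jᶜ` containing `φ(u, v)` pulls back to a superset
of `R_u` or of `C_v`. Hence the preimage of a cover of `φ(G)` is a cover of `G` of at most
the same size.
-/

section Transference

variable {α β : Type*}

def semiMap (φ : α → β) (U : Set β) (F : Set (Set α)) : Set (Set β) :=
  {S | S ⊆ U ∧ φ ⁻¹' S ∈ F}

lemma SemiFilter.semiMap {φ : α → β} {U : Set β} {F : Set (Set α)}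
    (hF : SemiFilter (φ ⁻¹' U) F) : SemiFilter U (semiMap φ U F) := by
  obtain ⟨⟨S₀, hS₀⟩, hsub, hup, hempty⟩ := hF
  refine ⟨⟨U, subset_rfl, hup S₀ hS₀ _ (hsub S₀ hS₀) subset_rfl⟩, fun S hS => hS.1,
    fun S hS T hST hTU => ⟨hTU, hup _ hS.2 _ (preimage_mono hST) (preimage_mono hTU)⟩,
    fun h => hempty ?_⟩
  simpa using h.2

lemma PreservesPair.semiMap {φ : α → β} {U : Set β} {F : Set (Set α)}
    {p : Set β × Set β} (hp : PreservesPair F (φ ⁻¹' p.1, φ ⁻¹' p.2)) :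
    PreservesPair (semiMap φ U F) p :=
  fun h₁ h₂ => ⟨inter_subset_left.trans h₁.1, hp h₁.2 h₂.2⟩

lemma Above.semiMap {φ : α → β} {𝓖 : Set (Set α)} {𝓑 : Set (Set β)} {U : Set β}
    {F : Set (Set α)} {a : α} (hF : SemiFilter (φ ⁻¹' U) F)
    (ha : Above 𝓖 (φ ⁻¹' U) F a)
    (hrefine : ∀ B ∈ 𝓑, φ a ∈ B → ∃ X ∈ 𝓖, a ∈ X ∧ X ⊆ φ ⁻¹' B) :
    Above 𝓑 U (semiMap φ U F) (φ a) := by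
  intro B hB haB
  obtain ⟨X, hX, haX, hXB⟩ := hrefine B hB haB
  refine ⟨inter_subset_right, hF.2.2.1 _ (ha X hX haX) _ ?_ inter_subset_right⟩
  exact inter_subset_inter_left _ hXB

lemma Covers.preimage {φ : α → β} (hφ : Function.Injective φ) {A : Set α}
    {𝓖 : Set (Set α)} {𝓑 : Set (Set β)} {Λ : Finset (Set β × Set β)}
    (hrefine : ∀ a ∈ A, ∀ B ∈ 𝓑, φ a ∈ B → ∃ X ∈ 𝓖, a ∈ X ∧ X ⊆ φ ⁻¹' B)
    (hΛ : Covers (φ '' A) 𝓑 Λ) :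
    Covers A 𝓖 (Λ.image fun p => (φ ⁻¹' p.1, φ ⁻¹' p.2)) := by
  classical
  obtain ⟨hΛsub, hΛcov⟩ := hΛ
  have hU : φ ⁻¹' (φ '' A)ᶜ = Aᶜ := by rw [preimage_compl, hφ.preimage_image]
  refine ⟨?_, ?_⟩
  · simp only [Finset.mem_image, forall_exists_index, and_imp]
    rintro _ p hp rfl
    rw [← hU]
    exact ⟨preimage_mono (hΛsub p hp).1, preimage_mono (hΛsub p hp).2⟩
  · rintro ⟨F, a, hF, haA, ha, hpres⟩
    rw [← hU] at hF ha
    exact hΛcov ⟨_, φ a, hF.semiMap, mem_image_of_mem φ haA,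
      ha.semiMap hF (hrefine a haA),
      fun p hp => PreservesPair.semiMap (hpres _ (Finset.mem_image_of_mem _ hp))⟩

theorem rho_le_rho_image {φ : α → β} (hφ : Function.Injective φ) {A : Set α}
    {𝓖 : Set (Set α)} {𝓑 : Set (Set β)}
    (hrefine : ∀ a ∈ A, ∀ B ∈ 𝓑, φ a ∈ B → ∃ X ∈ 𝓖, a ∈ X ∧ X ⊆ φ ⁻¹' B) :
    rho A 𝓖 ≤ rho (φ '' A) 𝓑 := by
  classical
  refine le_sInf ?_
  rintro _ ⟨Λ, hΛ, rfl⟩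
  exact sInf_le_of_le ⟨_, hΛ.preimage hφ hrefine, rfl⟩
    (by exact_mod_cast Finset.card_image_le)

end Transference

lemma binMap_injective (n : ℕ) : Function.Injective (binMap n) := by
  intro a b hab
  refine Fin.ext (Nat.eq_of_testBit_eq fun i => ?_)
  rcases lt_or_ge i n with hi | hi
  · have h := congrFun hab ⟨n - 1 - i, by omega⟩
    simpa [binMap, show n - 1 - (n - 1 - i) = i by omega] using h
  · have hpow := Nat.pow_le_pow_right (by norm_num : 0 < 2) hi
    rw [Nat.testBit_lt_two_pow (a.isLt.trans_le hpow),
      Nat.testBit_lt_two_pow (b.isLt.trans_le hpow)]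

lemma phi_apply_of_lt (n : ℕ) (p : Fin (2 ^ n) × Fin (2 ^ n)) {j : Fin (2 * n)}
    (hj : (j : ℕ) < n) :
    phi n p j = binMap n p.1 ⟨j, hj⟩ :=
  dif_pos hj

lemma phi_apply_of_le (n : ℕ) (p : Fin (2 ^ n) × Fin (2 ^ n)) {j : Fin (2 * n)}
    (hj : n ≤ (j : ℕ)) :
    phi n p j = binMap n p.2 ⟨j - n, by omega⟩ :=
  dif_neg (not_lt.2 hj)

lemma phi_injective (n : ℕ) : Function.Injective (phi n) := by
  intro p q h
  refine Prod.ext (binMap_injective n (funext fun j => ?_))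
    (binMap_injective n (funext fun j => ?_))
  · have hj := congrFun h ⟨j, by omega⟩
    rwa [phi_apply_of_lt n p j.isLt, phi_apply_of_lt n q j.isLt] at hj
  · have hj := congrFun h ⟨n + j, by omega⟩
    rw [phi_apply_of_le n p (by simp), phi_apply_of_le n q (by simp)] at hj
    simpa using hj

lemma exists_mem_graphGens_forall_phi_apply_eq (n : ℕ) (a : Fin (2 ^ n) × Fin (2 ^ n))
    (j : Fin (2 * n)) :
    ∃ X ∈ graphGens (2 ^ n) (2 ^ n), a ∈ X ∧ ∀ p ∈ X, phi n p j = phi n a j := by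
  rcases lt_or_ge (j : ℕ) n with hj | hj
  · refine ⟨rowSet _ _ a.1, Or.inl ⟨a.1, rfl⟩, rfl, fun p hp => ?_⟩
    rw [phi_apply_of_lt n p hj, phi_apply_of_lt n a hj, show p.1 = a.1 from hp]
  · refine ⟨colSet _ _ a.2, Or.inr ⟨a.2, rfl⟩, rfl, fun p hp => ?_⟩
    rw [phi_apply_of_le n p hj, phi_apply_of_le n a hj, show p.2 = a.2 from hp]

lemma graphGens_refine_cubeGens (n : ℕ) (a : Fin (2 ^ n) × Fin (2 ^ n)) :
    ∀ B ∈ cubeGens (2 * n), phi n a ∈ B →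
      ∃ X ∈ graphGens (2 ^ n) (2 ^ n), a ∈ X ∧ X ⊆ phi n ⁻¹' B := by
  rintro B ⟨j, rfl | rfl⟩ haB <;>
  · obtain ⟨X, hX, haX, hconst⟩ := exists_mem_graphGens_forall_phi_apply_eq n a j
    exact ⟨X, hX, haX, fun p hp => by simpa [hconst p hp] using haB⟩

theorem fusion_transference_general (n : ℕ) (G : Set (Fin (2 ^ n) × Fin (2 ^ n))) :
    rho G (graphGens (2 ^ n) (2 ^ n)) ≤ rho (phi n '' G) (cubeGens (2 * n)) :=
  rho_le_rho_image (phi_injective n) fun a _ => graphGens_refine_cubeGens n a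

/-- Fusion transference lemma: for `N = 2^n` and a non-trivial
graph `G ⊆ [N] × [N]`, `ρ(G, 𝓖_{N,N}) ≤ ρ(φ(G), 𝓑_{2n})`. -/
theorem fusion_transference (n : ℕ) (G : Set (Fin (2 ^ n) × Fin (2 ^ n)))
    (hG₁ : G ≠ ∅) (hG₂ : G ≠ Set.univ) :
    rho G (graphGens (2 ^ n) (2 ^ n)) ≤ rho (phi n '' G) (cubeGens (2 * n)) :=
  fusion_transference_general n G
end

section
/- Let N = 2^n. For every graph G ⊆ [N] × [N], D_∩(φ(G) | 𝓑_{2n}) ≥ D_∩(G | 𝓖_{N,N}); that is, the AND (intersection) complexity of the Boolean function associated with G is at least the intersection graph complexity of G. -/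
open Set Filter

/-!
Pull a sequence generating `φ(G)` from `𝓑_{2n}` back along `φ`: preimages commute with `∪` and
`∩`, and as `φ` is injective the pulled-back sequence ends in `G`. The preimage of a generator
`{v | v_j = b}` is a union of rows (`j < n`) or of columns (`j ≥ n`), so a prefix built from
`𝓖_{N,N}` by unions alone supplies all of them without a single intersection.
-/

section Generation

variable {Γ Δ : Type*}

lemma StepOK.mono {𝓑 𝓑' : Set (Set Γ)} {t : ℕ} {seq : Fin t → Set Γ} {ops : Fin t → Bool}
    (h : StepOK 𝓑 seq ops) (h𝓑 : 𝓑 ⊆ 𝓑') : StepOK 𝓑' seq ops := fun i => by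
  obtain ⟨X, Y, hX, hY, hi⟩ := h i
  exact ⟨X, Y, hX.imp_left (@h𝓑 X), hY.imp_left (@h𝓑 Y), hi⟩

lemma StepOK.preimage {𝓑 : Set (Set Γ)} {t : ℕ} {seq : Fin t → Set Γ} {ops : Fin t → Bool}
    (h : StepOK 𝓑 seq ops) (f : Δ → Γ) :
    StepOK (Set.preimage f '' 𝓑) (fun i => f ⁻¹' seq i) ops := fun i => by
  obtain ⟨X, Y, hX, hY, hi⟩ := h i
  have pull : ∀ Z, (Z ∈ 𝓑 ∨ ∃ j, j < i ∧ Z = seq j) →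
      (f ⁻¹' Z ∈ Set.preimage f '' 𝓑 ∨ ∃ j, j < i ∧ f ⁻¹' Z = f ⁻¹' seq j) :=
    fun Z => Or.imp (mem_image_of_mem _) fun ⟨j, hj, hZ⟩ => ⟨j, hj, hZ ▸ rfl⟩
  refine ⟨f ⁻¹' X, f ⁻¹' Y, pull X hX, pull Y hY, ?_⟩
  show f ⁻¹' seq i = _
  rw [hi]
  split_ifs <;> rfl

lemma StepOK.append {𝓑 : Set (Set Γ)} {p q : ℕ} {s : Fin p → Set Γ} {o : Fin p → Bool}
    {s' : Fin q → Set Γ} {o' : Fin q → Bool} (h : StepOK 𝓑 s o)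
    (h' : StepOK (𝓑 ∪ range s) s' o') : StepOK 𝓑 (Fin.append s s') (Fin.append o o') := by
  intro i
  induction i using Fin.addCases with
  | left i =>
    obtain ⟨X, Y, hX, hY, hi⟩ := h i
    have shift : ∀ Z, (Z ∈ 𝓑 ∨ ∃ j, j < i ∧ Z = s j) →
        (Z ∈ 𝓑 ∨ ∃ j, j < Fin.castAdd q i ∧ Z = Fin.append s s' j) :=
      fun Z => Or.imp_right fun ⟨j, hj, hZ⟩ => ⟨Fin.castAdd q j, hj, by simpa using hZ⟩
    exact ⟨X, Y, shift X hX, shift Y hY, by simpa using hi⟩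
  | right i =>
    obtain ⟨X, Y, hX, hY, hi⟩ := h' i
    have shift : ∀ Z, ((Z ∈ 𝓑 ∨ Z ∈ range s) ∨ ∃ j, j < i ∧ Z = s' j) →
        (Z ∈ 𝓑 ∨ ∃ j, j < Fin.natAdd p i ∧ Z = Fin.append s s' j) := by
      rintro Z ((hZ | ⟨j, rfl⟩) | ⟨j, hj, rfl⟩)
      · exact Or.inl hZ
      · exact Or.inr ⟨Fin.castAdd q j, by simp [Fin.lt_def]; omega, by simp⟩
      · exact Or.inr ⟨Fin.natAdd p j, by simpa using hj, by simp⟩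
    exact ⟨X, Y, shift X hX, shift Y hY, by simpa using hi⟩

lemma interCount_append {p q : ℕ} (o : Fin p → Bool) (o' : Fin q → Bool) :
    interCount (Fin.append o o') = interCount o + interCount o' := by
  simp only [interCount, Finset.card_filter, Fin.sum_univ_add, Fin.append_left, Fin.append_right]

def UnionGenerates (𝓖 𝓒 : Set (Set Γ)) : Prop :=
  ∃ (p : ℕ) (s : Fin p → Set Γ), StepOK 𝓖 s (fun _ => false) ∧ 𝓒 ⊆ 𝓖 ∪ range s

namespace UnionGenerates

variable {𝓖 𝓒 𝓒' : Set (Set Γ)}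

lemma mono (h : UnionGenerates 𝓖 𝓒) (h𝓒 : 𝓒' ⊆ 𝓒) : UnionGenerates 𝓖 𝓒' :=
  let ⟨p, s, hs, hsub⟩ := h
  ⟨p, s, hs, h𝓒.trans hsub⟩

lemma of_subset (h : 𝓒 ⊆ 𝓖) : UnionGenerates 𝓖 𝓒 :=
  ⟨0, Fin.elim0, fun i => i.elim0, h.trans subset_union_left⟩

lemma union (h : UnionGenerates 𝓖 𝓒) (h' : UnionGenerates 𝓖 𝓒') :
    UnionGenerates 𝓖 (𝓒 ∪ 𝓒') := by
  obtain ⟨p, s, hs, hsub⟩ := h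
  obtain ⟨q, s', hs', hsub'⟩ := h'
  have hops : Fin.append (fun _ : Fin p => false) (fun _ : Fin q => false) = fun _ => false := by
    funext i
    induction i using Fin.addCases <;> simp
  refine ⟨p + q, Fin.append s s', hops ▸ hs.append (hs'.mono subset_union_left), ?_⟩
  rintro C (hC | hC)
  · rcases hsub hC with hC | ⟨j, rfl⟩
    exacts [Or.inl hC, Or.inr ⟨Fin.castAdd q j, by simp⟩]
  · rcases hsub' hC with hC | ⟨j, rfl⟩
    exacts [Or.inl hC, Or.inr ⟨Fin.natAdd p j, by simp⟩]

lemma insert_union (h : UnionGenerates 𝓖 𝓒) {X Y : Set Γ} (hX : X ∈ 𝓖 ∪ 𝓒)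
    (hY : Y ∈ 𝓖 ∪ 𝓒) : UnionGenerates 𝓖 (insert (X ∪ Y) 𝓒) := by
  obtain ⟨p, s, hs, hsub⟩ := h
  have hsub' : 𝓖 ∪ 𝓒 ⊆ 𝓖 ∪ range s := union_subset subset_union_left hsub
  have hstep : StepOK (𝓖 ∪ range s) ![X ∪ Y] ![false] :=
    fun _ => ⟨X, Y, Or.inl (hsub' hX), Or.inl (hsub' hY), by simp⟩
  have hops : Fin.append (fun _ : Fin p => false) ![false] = fun _ => false := by
    funext i
    induction i using Fin.addCases <;> simp
  refine ⟨p + 1, Fin.append s ![X ∪ Y], hops ▸ hs.append hstep, ?_⟩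
  rintro C (rfl | hC)
  · exact Or.inr ⟨Fin.natAdd p 0, by simp⟩
  · rcases hsub hC with hC | ⟨j, rfl⟩
    exacts [Or.inl hC, Or.inr ⟨Fin.castAdd 1 j, by simp⟩]

lemma of_finite (h𝓒 : 𝓒.Finite) (h : ∀ C ∈ 𝓒, UnionGenerates 𝓖 {C}) :
    UnionGenerates 𝓖 𝓒 := by
  induction 𝓒, h𝓒 using Set.Finite.induction_on with
  | empty => exact of_subset (empty_subset _)
  | @insert C 𝓒 _ _ ih =>
    rw [insert_eq]
    exact (h C (mem_insert C 𝓒)).union (ih fun D hD => h D (mem_insert_of_mem C hD))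

lemma singleton_biUnion {ι : Type*} {S : Finset ι} (hS : S.Nonempty) {g : ι → Set Γ}
    (hg : ∀ i ∈ S, g i ∈ 𝓖) : UnionGenerates 𝓖 {⋃ i ∈ S, g i} := by
  classical
  induction hS using Finset.Nonempty.cons_induction with
  | singleton a => exact of_subset (by simpa using hg a (Finset.mem_singleton_self a))
  | cons a S _ _ ih =>
    have hS' := ih fun i hi => hg i (Finset.mem_cons_of_mem hi)
    rw [Finset.cons_eq_insert, Finset.set_biUnion_insert]
    exact (hS'.insert_union (Or.inl (hg a (Finset.mem_cons_self a S)))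
      (Or.inr (mem_singleton _))).mono (singleton_subset_iff.mpr (mem_insert _ _))

end UnionGenerates

theorem dcap_preimage_le {𝓑 : Set (Set Γ)} {𝓖 : Set (Set Δ)} {f : Δ → Γ}
    (h : UnionGenerates 𝓖 (preimage f '' 𝓑)) (A : Set Γ) :
    Dcap (f ⁻¹' A) 𝓖 ≤ Dcap A 𝓑 := by
  obtain ⟨p, P, hP, hsub⟩ := h
  refine le_sInf ?_
  rintro _ ⟨t, seq, ops, hstep, rfl, rfl⟩
  refine sInf_le ⟨p + t, Fin.append (n := t + 1) P (fun i : Fin (t + 1) => f ⁻¹' seq i),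
    Fin.append (n := t + 1) (fun _ : Fin p => false) ops,
    hP.append ((hstep.preimage f).mono hsub), Fin.append_right P _ (Fin.last t), ?_⟩
  rw [interCount_append]
  simp [interCount]

end Generation

lemma exists_binMap_eq (n : ℕ) (j : Fin n) (b : Bool) :
    ∃ u : Fin (2 ^ n), binMap n u j = b := by
  have hr : n - 1 - (j : ℕ) < n := by omega
  cases b
  · exact ⟨⟨0, Nat.two_pow_pos n⟩, by simp [binMap]⟩
  · exact ⟨⟨2 ^ (n - 1 - j), Nat.pow_lt_pow_right (by norm_num) hr⟩, by simp [binMap]⟩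

lemma unionGenerates_graphGens_fst_preimage {N M : ℕ} {S : Finset (Fin N)} (hS : S.Nonempty) :
    UnionGenerates (graphGens N M) {Prod.fst ⁻¹' ↑S} := by
  have hrows : Prod.fst ⁻¹' (S : Set (Fin N)) = ⋃ u ∈ S, rowSet N M u := by
    ext; simp [rowSet]
  exact hrows ▸ UnionGenerates.singleton_biUnion hS fun u _ => Or.inl ⟨u, rfl⟩

lemma unionGenerates_graphGens_snd_preimage {N M : ℕ} {S : Finset (Fin M)} (hS : S.Nonempty) :
    UnionGenerates (graphGens N M) {Prod.snd ⁻¹' ↑S} := by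
  have hcols : Prod.snd ⁻¹' (S : Set (Fin M)) = ⋃ v ∈ S, colSet N M v := by
    ext; simp [colSet]
  exact hcols ▸ UnionGenerates.singleton_biUnion hS fun v _ => Or.inr ⟨v, rfl⟩

lemma unionGenerates_graphGens_preimage_coord (n : ℕ) (j : Fin (2 * n)) (b : Bool) :
    UnionGenerates (graphGens (2 ^ n) (2 ^ n)) {phi n ⁻¹' {v | v j = b}} := by
  by_cases hj : (j : ℕ) < n
  · have hrows : phi n ⁻¹' {v | v j = b}
        = Prod.fst ⁻¹' ↑(Finset.univ.filter fun u => binMap n u ⟨j, hj⟩ = b) := by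
      ext; simp [phi, hj]
    obtain ⟨u, hu⟩ := exists_binMap_eq n ⟨j, hj⟩ b
    exact hrows ▸ unionGenerates_graphGens_fst_preimage ⟨u, by simpa using hu⟩
  · have hcols : phi n ⁻¹' {v | v j = b}
        = Prod.snd ⁻¹' ↑(Finset.univ.filter fun u => binMap n u ⟨j - n, by omega⟩ = b) := by
      ext; simp [phi, hj]
    obtain ⟨u, hu⟩ := exists_binMap_eq n ⟨j - n, by omega⟩ b
    exact hcols ▸ unionGenerates_graphGens_snd_preimage ⟨u, by simpa using hu⟩

lemma unionGenerates_graphGens_preimage_cubeGens (n : ℕ) :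
    UnionGenerates (graphGens (2 ^ n) (2 ^ n)) (preimage (phi n) '' cubeGens (2 * n)) := by
  refine UnionGenerates.of_finite (toFinite _) ?_
  rintro _ ⟨_, ⟨j, rfl | rfl⟩, rfl⟩
  exacts [unionGenerates_graphGens_preimage_coord n j true,
    unionGenerates_graphGens_preimage_coord n j false]

/-- Tight transference from graph complexity to circuit complexity:
for `N = 2^n` and every graph `G ⊆ [N] × [N]`,
`D_∩(φ(G) | 𝓑_{2n}) ≥ D_∩(G | 𝓖_{N,N})`. -/
theorem inter_transference (n : ℕ) (G : Set (Fin (2 ^ n) × Fin (2 ^ n))) :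
    Dcap (phi n '' G) (cubeGens (2 * n)) ≥ Dcap G (graphGens (2 ^ n) (2 ^ n)) := by
  have hpull := dcap_preimage_le (unionGenerates_graphGens_preimage_cubeGens n) (phi n '' G)
  rwa [preimage_image_eq G (phi_injective n)] at hpull
end
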